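/- arXiv:cs/0201018 — 4 statements merged into one kernel-verified Lean document; each statement's English description precedes it below -/
import Mathlib

section
/- A folding of an open HP chain containing h H-labeled monomers has at most h+1 contacts, and a folding of a closed HP chain containing h H-labeled monomers has at most h contacts. -/
/-! ## Basic definitions for the 2D HP model on the square lattice ℤ² -/

/-- A lattice point. -/
abbrev Pt : Type := ℤ × ℤ

/-- Two lattice points are adjacent (at Euclidean distance 1). -/
def adjPt (p q : Pt) : Prop := (p.1 - q.1).natAbs + (p.2 - q.2).natAbs = 1

/-- Chain adjacency (consecutiveness) of monomer indices in an open chain of length `n`. -/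
def openAdj (n : ℕ) (i j : Fin n) : Prop := i.val + 1 = j.val ∨ j.val + 1 = i.val

/-- Chain adjacency of monomer indices in a closed chain of length `n`
(consecutive cyclically, so also the pair `{n-1, 0}`). -/
def closedAdj (n : ℕ) (i j : Fin n) : Prop :=
  (i.val + 1) % n = j.val ∨ (j.val + 1) % n = i.val

/-- A folding of an open chain of `n` monomers: an injective map into ℤ² sending
consecutive monomers to adjacent lattice points. -/
def IsOpenFolding (n : ℕ) (pos : Fin n → Pt) : Prop :=
  Function.Injective pos ∧ ∀ i j : Fin n, i.val + 1 = j.val → adjPt (pos i) (pos j)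

/-- A folding of a closed chain of `n` monomers: an injective map into ℤ² sending
cyclically consecutive monomers to adjacent lattice points. -/
def IsClosedFolding (n : ℕ) (pos : Fin n → Pt) : Prop :=
  Function.Injective pos ∧ ∀ i j : Fin n, (i.val + 1) % n = j.val → adjPt (pos i) (pos j)

/-- Monomers `i` and `j` form a contact in a folding `pos` of the open chain with labels `c`
(`true` = H, `false` = P): both are H, they are not consecutive along the chain, and their
images are lattice-adjacent. -/
def openContactRel (n : ℕ) (c : Fin n → Bool) (pos : Fin n → Pt) (i j : Fin n) : Prop :=
  c i = true ∧ c j = true ∧ ¬ openAdj n i j ∧ adjPt (pos i) (pos j)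

/-- Contact relation for a folding of a closed chain. -/
def closedContactRel (n : ℕ) (c : Fin n → Bool) (pos : Fin n → Pt) (i j : Fin n) : Prop :=
  c i = true ∧ c j = true ∧ ¬ closedAdj n i j ∧ adjPt (pos i) (pos j)

/-- The set of contacts (as unordered pairs) of a folding of an open chain. -/
def openContactSet (n : ℕ) (c : Fin n → Bool) (pos : Fin n → Pt) : Set (Sym2 (Fin n)) :=
  {e | ∃ i j : Fin n, e = s(i, j) ∧ openContactRel n c pos i j}

/-- The set of contacts (as unordered pairs) of a folding of a closed chain. -/
def closedContactSet (n : ℕ) (c : Fin n → Bool) (pos : Fin n → Pt) : Set (Sym2 (Fin n)) :=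
  {e | ∃ i j : Fin n, e = s(i, j) ∧ closedContactRel n c pos i j}

/-- The number of contacts of a folding of an open chain. -/
noncomputable def openContacts (n : ℕ) (c : Fin n → Bool) (pos : Fin n → Pt) : ℕ :=
  (openContactSet n c pos).ncard

/-- The number of contacts of a folding of a closed chain. -/
noncomputable def closedContacts (n : ℕ) (c : Fin n → Bool) (pos : Fin n → Pt) : ℕ :=
  (closedContactSet n c pos).ncard

/-- A folding of an open chain is optimal if it maximizes the number of contacts. -/
def OpenOptimal (n : ℕ) (c : Fin n → Bool) (pos : Fin n → Pt) : Prop :=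
  IsOpenFolding n pos ∧
    ∀ pos', IsOpenFolding n pos' → openContacts n c pos' ≤ openContacts n c pos

/-- A folding of a closed chain is optimal if it maximizes the number of contacts. -/
def ClosedOptimal (n : ℕ) (c : Fin n → Bool) (pos : Fin n → Pt) : Prop :=
  IsClosedFolding n pos ∧
    ∀ pos', IsClosedFolding n pos' → closedContacts n c pos' ≤ closedContacts n c pos

/-- The number of H-labeled monomers of a chain. -/
def hCount (n : ℕ) (c : Fin n → Bool) : ℕ :=
  (Finset.univ.filter fun i : Fin n => c i = true).card

/-- The contact graph of a folding of an open chain. -/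
def openContactGraph (n : ℕ) (c : Fin n → Bool) (pos : Fin n → Pt) : SimpleGraph (Fin n) :=
  SimpleGraph.fromRel (openContactRel n c pos)

/-- The contact graph of a folding of a closed chain. -/
def closedContactGraph (n : ℕ) (c : Fin n → Bool) (pos : Fin n → Pt) : SimpleGraph (Fin n) :=
  SimpleGraph.fromRel (closedContactRel n c pos)

/-- The conformation graph of a folding of a closed chain: chain edges together with contacts. -/
def conformationGraph (n : ℕ) (c : Fin n → Bool) (pos : Fin n → Pt) : SimpleGraph (Fin n) :=
  SimpleGraph.fromRel (fun i j => closedAdj n i j ∨ closedContactRel n c pos i j)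

/-- Squared Euclidean distance between lattice points. -/
def sqDist (p q : Pt) : ℤ := (p.1 - q.1) ^ 2 + (p.2 - q.2) ^ 2

/-- An isometry of the lattice ℤ² (exactly the translations, rotations by multiples of 90°,
reflections, and their compositions). -/
def IsLatticeIsometry (T : Pt → Pt) : Prop :=
  Function.Bijective T ∧ ∀ p q, sqDist (T p) (T q) = sqDist p q

/-- Two foldings are congruent if one is the image of the other under an isometry of ℤ². -/
def FoldingCongruent (n : ℕ) (pos pos' : Fin n → Pt) : Prop :=
  ∃ T : Pt → Pt, IsLatticeIsometry T ∧ ∀ i, pos' i = T (pos i)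

/-! ## Specific chains -/

/-- The chain (PHP)^m (for `n = 3m`): H exactly at positions ≡ 1 mod 3 (0-indexed). -/
def phpLabel (n : ℕ) : Fin n → Bool := fun i => decide (i.val % 3 = 1)

/-- The closed chain `S_k = P (HP)^u P (HP)^d` of length `2k+2`, where
`u = ⌈k/2⌉` and `d = ⌊k/2⌋` (0-indexed labels). -/
def skLabel (k : ℕ) : Fin (2*k+2) → Bool := fun i =>
  if i.val ≤ 2 * ((k+1)/2) then decide (i.val % 2 = 1) else decide (i.val % 2 = 0)

/-- The open chain `Z_{2k} = (HP)^k (PH)^k` of length `4k` (0-indexed labels). -/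
def zLabel (k : ℕ) : Fin (4*k) → Bool := fun i =>
  if i.val < 2*k then decide (i.val % 2 = 0) else decide (i.val % 2 = 1)

/-- The direction of the `j`-th edge of the folding `F_k` of `S_k`:
`E (ES)^d W (WN)^u` when `k` is even and `E (ES)^d S (WN)^u` when `k` is odd,
where `E = (1,0)`, `W = (-1,0)`, `N = (0,1)`, `S = (0,-1)`. -/
def fkDir (k : ℕ) (j : ℕ) : Pt :=
  if j = 0 then (1, 0)
  else if j ≤ 2 * (k/2) then (if j % 2 = 1 then (1, 0) else (0, -1))
  else if j = 2 * (k/2) + 1 then (if k % 2 = 0 then (-1, 0) else (0, -1))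
  else if (j - (2 * (k/2) + 2)) % 2 = 0 then (-1, 0) else (0, 1)

/-- The position of monomer `i` in the folding `F_k` of the closed chain `S_k`. -/
def fkPos (k : ℕ) (i : Fin (2*k+2)) : Pt := ∑ j ∈ Finset.range i.val, fkDir k j

/-- The direction of the `j`-th edge of the standard folding of `Z_{2k}`: the PP edge
(edge `2k-1`) is horizontal, the two edges adjacent to it descend from it, and the two
halves of the chain form two parallel staircases. -/
def stdZDir (k : ℕ) (j : ℕ) : Pt :=
  if j ≤ 2*k - 1 then (if j % 2 = 0 then (0, 1) else (-1, 0))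
  else if j = 2*k then (0, -1)
  else if j % 2 = 1 then (0, -1) else (1, 0)

/-- The position of monomer `i` in the standard folding of the open chain `Z_{2k}`. -/
def stdZPos (k : ℕ) (i : Fin (4*k)) : Pt := ∑ j ∈ Finset.range i.val, stdZDir k j

/-! ## Geometry: polygon of a closed folding, bounding box, missing contacts -/

/-- The real point corresponding to a lattice point. -/
def toR (p : Pt) : ℝ × ℝ := ((p.1 : ℝ), (p.2 : ℝ))

/-- The closed polygonal curve in ℝ² traced by a folded closed chain. -/
def polygonOf (n : ℕ) (pos : Fin n → Pt) : Set (ℝ × ℝ) :=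
  ⋃ i : Fin n, segment ℝ (toR (pos i))
    (toR (pos ⟨(i.val + 1) % n, Nat.mod_lt _ (Nat.lt_of_le_of_lt (Nat.zero_le i.val) i.isLt)⟩))

/-- `q` lies in the (closed) axis-parallel bounding box of the folding `pos`. -/
def inBBox (n : ℕ) (pos : Fin n → Pt) (q : Pt) : Prop :=
  (∃ i, (pos i).1 ≤ q.1) ∧ (∃ i, q.1 ≤ (pos i).1) ∧
  (∃ i, (pos i).2 ≤ q.2) ∧ (∃ i, q.2 ≤ (pos i).2)

/-- `q` lies on the wall `w` of the bounding box of the folding `pos`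
(`0` = east, `1` = west, `2` = north, `3` = south). -/
def onWall (n : ℕ) (pos : Fin n → Pt) (w : Fin 4) (q : Pt) : Prop :=
  inBBox n pos q ∧
    (if w = 0 then ∀ i, (pos i).1 ≤ q.1
     else if w = 1 then ∀ i, q.1 ≤ (pos i).1
     else if w = 2 then ∀ i, (pos i).2 ≤ q.2
     else ∀ i, q.2 ≤ (pos i).2)

/-- The segment from `p` to `q` lies along the boundary of the bounding box
(both endpoints on a common wall). -/
def edgeOnBoundary (n : ℕ) (pos : Fin n → Pt) (p q : Pt) : Prop :=
  ∃ w : Fin 4, onWall n pos w p ∧ onWall n pos w q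

/-- The missing contacts of a folding of an open chain: pairs `(v, q)` where `v` is an
H monomer and `q` is a lattice point adjacent to the image of `v` that is occupied
neither by a chain-neighbor of `v` nor by any H monomer.  The corresponding lattice
edge is the one from `pos v` to `q`. -/
def missingContactSet (n : ℕ) (c : Fin n → Bool) (pos : Fin n → Pt) : Set (Fin n × Pt) :=
  {vq | c vq.1 = true ∧ adjPt (pos vq.1) vq.2 ∧
        (∀ w : Fin n, openAdj n vq.1 w → pos w ≠ vq.2) ∧
        (∀ u : Fin n, c u = true → pos u ≠ vq.2)}

/-- A straight H node: a non-endpoint H monomer lying, together with both of its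
chain-neighbors, on a common wall of the bounding box. -/
def isStraightH (n : ℕ) (c : Fin n → Bool) (pos : Fin n → Pt) (i : Fin n) : Prop :=
  c i = true ∧ i.val ≠ 0 ∧ i.val ≠ n - 1 ∧
  ∃ w : Fin 4, onWall n pos w (pos i) ∧ ∀ j : Fin n, openAdj n i j → onWall n pos w (pos j)

/-- A coupled straight H node: a straight H node such that the preceding or following
H monomer along the chain lies on the same wall. -/
def isCoupledH (n : ℕ) (c : Fin n → Bool) (pos : Fin n → Pt) (i : Fin n) : Prop :=
  isStraightH n c pos i ∧
  ∃ w : Fin 4, onWall n pos w (pos i) ∧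
    ∃ j : Fin n, c j = true ∧ j ≠ i ∧ onWall n pos w (pos j) ∧
      ((j.val < i.val ∧ ∀ l : Fin n, j.val < l.val → l.val < i.val → c l = false) ∨
       (i.val < j.val ∧ ∀ l : Fin n, i.val < l.val → l.val < j.val → c l = false))

/-- A solitary straight H node: a straight H node that is not coupled. -/
def isSolitaryH (n : ℕ) (c : Fin n → Bool) (pos : Fin n → Pt) (i : Fin n) : Prop :=
  isStraightH n c pos i ∧ ¬ isCoupledH n c pos i

/-! ## Graph-theoretic notions -/

/-- A graph is a disjoint union of even cycles (plus isolated vertices): every vertex has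
degree 0 or 2, and the graph has no odd cycles (is 2-colorable). -/
def IsDisjointUnionOfEvenCycles {V : Type*} (G : SimpleGraph V) : Prop :=
  (∀ v, (G.neighborSet v).ncard = 0 ∨ (G.neighborSet v).ncard = 2) ∧ G.Colorable 2

/-- A graph consists of exactly `k` vertex-disjoint 4-cycles (plus isolated vertices). -/
def IsDisjointUnionOfFourCycles {V : Type*} (G : SimpleGraph V) (k : ℕ) : Prop :=
  ∃ f : Fin k × Fin 4 → V, Function.Injective f ∧
    ∀ a b : V, G.Adj a b ↔ ∃ m : Fin k, ∃ i j : Fin 4,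
      a = f (m, i) ∧ b = f (m, j) ∧ ((i.val + 1) % 4 = j.val ∨ (j.val + 1) % 4 = i.val)

/-- The vertex set `s` induces a 4-cycle of `G`: it has 4 elements, each of which has
exactly two neighbors inside `s`. -/
def IsFourCycleIn {V : Type*} (G : SimpleGraph V) (s : Set V) : Prop :=
  s.ncard = 4 ∧ ∀ v ∈ s, (s ∩ {u | G.Adj v u}).ncard = 2

/-- The chain position of the `a`-th H monomer (0-indexed) of the closed chain `S_k`. -/
def hIdx (k : ℕ) (a : Fin k) : Fin (2*k+2) :=
  if a.val + 1 ≤ (k+1)/2 then ⟨2*a.val+1, by have := a.isLt; omega⟩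
  else ⟨2*a.val+2, by have := a.isLt; omega⟩
/-! ### Auxiliary lemmas -/

lemma adjPt_symm' {p q : Pt} (h : adjPt p q) : adjPt q p := by
  unfold adjPt at *; omega

lemma adjPt_irrefl' {p : Pt} (h : adjPt p p) : False := by
  simp [adjPt, sub_self] at h

/-- The four lattice neighbors of a point. -/
def nbrsPt (p : Pt) : Finset Pt :=
  {(p.1+1,p.2),(p.1-1,p.2),(p.1,p.2+1),(p.1,p.2-1)}

lemma mem_nbrsPt {p q : Pt} : q ∈ nbrsPt p ↔ adjPt p q := by
  obtain ⟨a,b⟩ := p; obtain ⟨x,y⟩ := q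
  simp only [nbrsPt, Finset.mem_insert, Finset.mem_singleton, Prod.ext_iff, adjPt]
  omega

lemma card_nbrsPt (p : Pt) : (nbrsPt p).card = 4 := by
  obtain ⟨a,b⟩ := p
  rw [nbrsPt]
  rw [Finset.card_insert_of_notMem (by simp only [Finset.mem_insert, Finset.mem_singleton, Prod.ext_iff]; omega),
      Finset.card_insert_of_notMem (by simp only [Finset.mem_insert, Finset.mem_singleton, Prod.ext_iff]; omega),
      Finset.card_insert_of_notMem (by simp only [Finset.mem_singleton, Prod.ext_iff]; omega),
      Finset.card_singleton]

/-- Core degree bound: if every graph-neighbor of `v` maps to a lattice neighbor of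
`pos v` avoiding the images of the finset `S`, then the degree of `v` is at most
`4 - S.card`. -/
lemma deg_le_core {n : ℕ} {pos : Fin n → Pt} (hinj : Function.Injective pos)
    {G : SimpleGraph (Fin n)} [DecidableRel G.Adj] (v : Fin n) (S : Finset (Fin n))
    (hS : ∀ j ∈ S, adjPt (pos v) (pos j))
    (hAdj : ∀ u, G.Adj v u → adjPt (pos v) (pos u) ∧ u ∉ S) :
    G.degree v ≤ 4 - S.card := by
  have h1 : (G.neighborFinset v).card ≤ ((nbrsPt (pos v)) \ S.image pos).card := by
    apply Finset.card_le_card_of_injOn pos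
    · intro u hu
      rw [Finset.mem_coe, SimpleGraph.mem_neighborFinset] at hu
      obtain ⟨ha, hb⟩ := hAdj u hu
      rw [Finset.mem_coe, Finset.mem_sdiff, mem_nbrsPt]
      refine ⟨ha, fun hmem => ?_⟩
      obtain ⟨j, hj, hje⟩ := Finset.mem_image.mp hmem
      exact hb (by rwa [hinj hje] at hj)
    · exact fun a _ b _ h => hinj h
  have h2 : (S.image pos) ⊆ nbrsPt (pos v) := by
    intro q hq; obtain ⟨j,hj,rfl⟩ := Finset.mem_image.mp hq
    exact mem_nbrsPt.mpr (hS j hj)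
  have h3 := Finset.card_sdiff_of_subset h2
  have h4 : (S.image pos).card = S.card := Finset.card_image_of_injective _ hinj
  have h5 := card_nbrsPt (pos v)
  rw [← SimpleGraph.card_neighborFinset_eq_degree]
  omega

lemma openContactRel_symm {n : ℕ} {c : Fin n → Bool} {pos : Fin n → Pt} {i j : Fin n}
    (h : openContactRel n c pos i j) : openContactRel n c pos j i := by
  obtain ⟨h1, h2, h3, h4⟩ := h
  exact ⟨h2, h1, fun hadj => h3 hadj.symm, adjPt_symm' h4⟩

lemma closedContactRel_symm {n : ℕ} {c : Fin n → Bool} {pos : Fin n → Pt} {i j : Fin n}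
    (h : closedContactRel n c pos i j) : closedContactRel n c pos j i := by
  obtain ⟨h1, h2, h3, h4⟩ := h
  exact ⟨h2, h1, fun hadj => h3 hadj.symm, adjPt_symm' h4⟩

lemma openContactSet_eq_edgeSet (n : ℕ) (c : Fin n → Bool) (pos : Fin n → Pt) :
    openContactSet n c pos = (openContactGraph n c pos).edgeSet := by
  ext e
  induction e using Sym2.ind with
  | _ i j =>
    simp only [openContactSet, Set.mem_setOf_eq, SimpleGraph.mem_edgeSet, openContactGraph,
      SimpleGraph.fromRel_adj]
    constructor
    · rintro ⟨a, b, he, hr⟩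
      have hab : a ≠ b := by
        rintro rfl; exact adjPt_irrefl' hr.2.2.2
      rw [Sym2.eq_iff] at he
      rcases he with ⟨rfl, rfl⟩ | ⟨rfl, rfl⟩
      · exact ⟨hab, Or.inl hr⟩
      · exact ⟨hab.symm, Or.inr hr⟩
    · rintro ⟨hne, hr | hr⟩
      · exact ⟨i, j, rfl, hr⟩
      · exact ⟨i, j, rfl, openContactRel_symm hr⟩

lemma closedContactSet_eq_edgeSet (n : ℕ) (c : Fin n → Bool) (pos : Fin n → Pt) :
    closedContactSet n c pos = (closedContactGraph n c pos).edgeSet := by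
  ext e
  induction e using Sym2.ind with
  | _ i j =>
    simp only [closedContactSet, Set.mem_setOf_eq, SimpleGraph.mem_edgeSet, closedContactGraph,
      SimpleGraph.fromRel_adj]
    constructor
    · rintro ⟨a, b, he, hr⟩
      have hab : a ≠ b := by
        rintro rfl; exact adjPt_irrefl' hr.2.2.2
      rw [Sym2.eq_iff] at he
      rcases he with ⟨rfl, rfl⟩ | ⟨rfl, rfl⟩
      · exact ⟨hab, Or.inl hr⟩
      · exact ⟨hab.symm, Or.inr hr⟩
    · rintro ⟨hne, hr | hr⟩
      · exact ⟨i, j, rfl, hr⟩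
      · exact ⟨i, j, rfl, closedContactRel_symm hr⟩

lemma closedContactSet_small (n : ℕ) (hn : n ≤ 2) (c : Fin n → Bool) (pos : Fin n → Pt) :
    closedContactSet n c pos = ∅ := by
  ext e
  simp only [closedContactSet, Set.mem_setOf_eq, Set.mem_empty_iff_false, iff_false]
  rintro ⟨i, j, he, hc1, hc2, hna, hadj⟩
  by_cases hij : i = j
  · subst hij; exact adjPt_irrefl' hadj
  · apply hna
    have hvi := i.isLt
    have hvj := j.isLt
    have hvij : i.val ≠ j.val := fun h => hij (Fin.ext h)
    unfold closedAdj
    interval_cases n <;> omega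

lemma open_degree_le (n : ℕ) (c : Fin n → Bool) (pos : Fin n → Pt)
    (hf : IsOpenFolding n pos) [DecidableRel (openContactGraph n c pos).Adj] (v : Fin n) :
    (openContactGraph n c pos).degree v ≤
      2 + ((if v.val = 0 then 1 else 0) + (if v.val = n - 1 then 1 else 0)) := by
  classical
  obtain ⟨hinj, hstep⟩ := hf
  set S : Finset (Fin n) := Finset.univ.filter (fun j => openAdj n v j) with hSdef
  have hmemS : ∀ j, j ∈ S ↔ openAdj n v j := by
    intro j; simp [hSdef]
  have hS : ∀ j ∈ S, adjPt (pos v) (pos j) := by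
    intro j hj
    rcases (hmemS j).mp hj with h | h
    · exact hstep v j h
    · exact adjPt_symm' (hstep j v h)
  have hAdj : ∀ u, (openContactGraph n c pos).Adj v u →
      adjPt (pos v) (pos u) ∧ u ∉ S := by
    intro u hu
    rw [openContactGraph, SimpleGraph.fromRel_adj] at hu
    obtain ⟨hne, hr | hr⟩ := hu
    · exact ⟨hr.2.2.2, fun hmem => hr.2.2.1 ((hmemS u).mp hmem)⟩
    · refine ⟨adjPt_symm' hr.2.2.2, fun hmem => hr.2.2.1 ?_⟩
      rcases (hmemS u).mp hmem with h | h
      · exact Or.inr h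
      · exact Or.inl h
  have hcore := deg_le_core hinj v S hS hAdj
  have hv := v.isLt
  by_cases h0 : v.val = 0
  · by_cases h1 : v.val = n - 1
    · have hScard : S.card ≤ 4 := by
        calc S.card ≤ (Finset.univ : Finset (Fin n)).card := Finset.card_le_card (by simp [hSdef])
        _ = n := by simp
        _ ≤ 4 := by omega
      split_ifs <;> omega
    · have hnext : (⟨v.val + 1, by omega⟩ : Fin n) ∈ S :=
        (hmemS _).mpr (Or.inl rfl)
      have hcard : 1 ≤ S.card := Finset.card_pos.mpr ⟨_, hnext⟩
      split_ifs <;> omega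
  · by_cases h1 : v.val = n - 1
    · have hprev : (⟨v.val - 1, by omega⟩ : Fin n) ∈ S :=
        (hmemS _).mpr (Or.inr (by simp; omega))
      have hcard : 1 ≤ S.card := Finset.card_pos.mpr ⟨_, hprev⟩
      split_ifs <;> omega
    · have hprev : (⟨v.val - 1, by omega⟩ : Fin n) ∈ S :=
        (hmemS _).mpr (Or.inr (by simp; omega))
      have hnext : (⟨v.val + 1, by omega⟩ : Fin n) ∈ S :=
        (hmemS _).mpr (Or.inl rfl)
      have hpn : (⟨v.val - 1, by omega⟩ : Fin n) ≠ (⟨v.val + 1, by omega⟩ : Fin n) := by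
        intro h; rw [Fin.mk.injEq] at h; omega
      have hsub : ({⟨v.val - 1, by omega⟩, ⟨v.val + 1, by omega⟩} : Finset (Fin n)) ⊆ S := by
        rw [Finset.insert_subset_iff, Finset.singleton_subset_iff]
        exact ⟨hprev, hnext⟩
      have hcard : 2 ≤ S.card := by
        have := Finset.card_le_card hsub
        rwa [Finset.card_pair hpn] at this
      split_ifs <;> omega

lemma closed_degree_le (n : ℕ) (hn : 3 ≤ n) (c : Fin n → Bool) (pos : Fin n → Pt)
    (hf : IsClosedFolding n pos) [DecidableRel (closedContactGraph n c pos).Adj] (v : Fin n) :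
    (closedContactGraph n c pos).degree v ≤ 2 := by
  classical
  obtain ⟨hinj, hstep⟩ := hf
  set S : Finset (Fin n) := Finset.univ.filter (fun j => closedAdj n v j) with hSdef
  have hmemS : ∀ j, j ∈ S ↔ closedAdj n v j := by
    intro j; simp [hSdef]
  have hS : ∀ j ∈ S, adjPt (pos v) (pos j) := by
    intro j hj
    rcases (hmemS j).mp hj with h | h
    · exact hstep v j h
    · exact adjPt_symm' (hstep j v h)
  have hAdj : ∀ u, (closedContactGraph n c pos).Adj v u →
      adjPt (pos v) (pos u) ∧ u ∉ S := by
    intro u hu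
    rw [closedContactGraph, SimpleGraph.fromRel_adj] at hu
    obtain ⟨hne, hr | hr⟩ := hu
    · exact ⟨hr.2.2.2, fun hmem => hr.2.2.1 ((hmemS u).mp hmem)⟩
    · refine ⟨adjPt_symm' hr.2.2.2, fun hmem => hr.2.2.1 ?_⟩
      rcases (hmemS u).mp hmem with h | h
      · exact Or.inr h
      · exact Or.inl h
  have hcore := deg_le_core hinj v S hS hAdj
  have hv := v.isLt
  have e1 : (v.val + (n-1)) % n = if v.val = 0 then n-1 else v.val - 1 := by
    split_ifs with h
    · rw [h]; simpa using Nat.mod_eq_of_lt (by omega)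
    · have hx : v.val + (n-1) = (v.val - 1) + n := by omega
      rw [hx, Nat.add_mod_right]; exact Nat.mod_eq_of_lt (by omega)
  have e2 : (v.val + 1) % n = if v.val = n-1 then 0 else v.val + 1 := by
    split_ifs with h
    · rw [h]
      have hx : n - 1 + 1 = n := by omega
      rw [hx, Nat.mod_self]
    · exact Nat.mod_eq_of_lt (by omega)
  have hprev : (⟨(v.val + (n-1)) % n, Nat.mod_lt _ (by omega)⟩ : Fin n) ∈ S := by
    refine (hmemS _).mpr (Or.inr ?_)
    show ((v.val + (n-1)) % n + 1) % n = v.val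
    rw [Nat.mod_add_mod]
    have hx : v.val + (n-1) + 1 = v.val + n := by omega
    rw [hx, Nat.add_mod_right]
    exact Nat.mod_eq_of_lt v.isLt
  have hnext : (⟨(v.val + 1) % n, Nat.mod_lt _ (by omega)⟩ : Fin n) ∈ S :=
    (hmemS _).mpr (Or.inl rfl)
  have hpn : (⟨(v.val + (n-1)) % n, Nat.mod_lt _ (by omega)⟩ : Fin n) ≠
      (⟨(v.val + 1) % n, Nat.mod_lt _ (by omega)⟩ : Fin n) := by
    intro h; rw [Fin.mk.injEq, e1, e2] at h
    split_ifs at h <;> omega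
  have hsub : ({⟨(v.val + (n-1)) % n, Nat.mod_lt _ (by omega)⟩,
      ⟨(v.val + 1) % n, Nat.mod_lt _ (by omega)⟩} : Finset (Fin n)) ⊆ S := by
    rw [Finset.insert_subset_iff, Finset.singleton_subset_iff]
    exact ⟨hprev, hnext⟩
  have hcard : 2 ≤ S.card := by
    have := Finset.card_le_card hsub
    rwa [Finset.card_pair hpn] at this
  omega

/-- A folding of an open HP chain containing `h` H-labeled monomers has at
most `h + 1` contacts, and a folding of a closed HP chain containing `h` H-labeled monomers
has at most `h` contacts. -/
theorem open_folding_contacts_le_hCount_add_one_and_closed_folding_contacts_le_hCount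
    (n : ℕ) (c : Fin n → Bool) (pos : Fin n → Pt) :
    (IsOpenFolding n pos → openContacts n c pos ≤ hCount n c + 1) ∧
    (IsClosedFolding n pos → closedContacts n c pos ≤ hCount n c) := by
  classical
  constructor
  · intro hf
    set G := openContactGraph n c pos with hG
    have hedge : openContacts n c pos = G.edgeFinset.card := by
      rw [openContacts, openContactSet_eq_edgeSet, ← SimpleGraph.coe_edgeFinset,
        Set.ncard_coe_finset]
    have hhs := SimpleGraph.sum_degrees_eq_twice_card_edges G
    have hdeg0 : ∀ v, c v ≠ true → G.degree v = 0 := by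
      intro v hv
      rw [← SimpleGraph.card_neighborFinset_eq_degree, Finset.card_eq_zero,
        Finset.eq_empty_iff_forall_notMem]
      intro u hu
      rw [SimpleGraph.mem_neighborFinset, hG, openContactGraph,
        SimpleGraph.fromRel_adj] at hu
      rcases hu.2 with hr | hr
      · exact hv hr.1
      · exact hv hr.2.1
    have hle : ∀ v : Fin n, G.degree v ≤
        (if c v = true then
          2 + ((if v.val = 0 then 1 else 0) + (if v.val = n - 1 then 1 else 0)) else 0) := by
      intro v
      by_cases hv : c v = true
      · rw [if_pos hv]; exact open_degree_le n c pos hf v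
      · rw [if_neg hv, hdeg0 v hv]
    have hsum : ∑ v : Fin n, G.degree v ≤ 2 * hCount n c + 2 := by
      calc ∑ v : Fin n, G.degree v
          ≤ ∑ v : Fin n, (if c v = true then
              2 + ((if v.val = 0 then 1 else 0) + (if v.val = n - 1 then 1 else 0)) else 0) :=
            Finset.sum_le_sum (fun v _ => hle v)
        _ = ∑ v ∈ Finset.univ.filter (fun v => c v = true),
              (2 + ((if v.val = 0 then 1 else 0) + (if v.val = n - 1 then 1 else 0))) :=
            (Finset.sum_filter _ _).symm
        _ = 2 * hCount n c + ∑ v ∈ Finset.univ.filter (fun v => c v = true),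
              ((if v.val = 0 then 1 else 0) + (if v.val = n - 1 then 1 else 0)) := by
            rw [Finset.sum_add_distrib, Finset.sum_const, smul_eq_mul, hCount]
            ring
        _ ≤ 2 * hCount n c + 2 := by
            have h1 : ∑ v ∈ Finset.univ.filter (fun v => c v = true),
                ((if v.val = 0 then 1 else 0) + (if v.val = n - 1 then 1 else 0)) ≤
                ∑ v : Fin n,
                ((if v.val = 0 then 1 else 0) + (if v.val = n - 1 then 1 else 0)) :=
              Finset.sum_le_sum_of_subset (Finset.filter_subset _ _)
            have h2 : ∑ v : Fin n,
                ((if v.val = 0 then 1 else 0) + (if v.val = n - 1 then 1 else 0)) =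
                (Finset.univ.filter (fun v : Fin n => v.val = 0)).card +
                (Finset.univ.filter (fun v : Fin n => v.val = n - 1)).card := by
              rw [Finset.sum_add_distrib, Finset.card_filter, Finset.card_filter]
            have h3 : (Finset.univ.filter (fun v : Fin n => v.val = 0)).card ≤ 1 :=
              Finset.card_le_one.mpr (fun a ha b hb => by
                simp only [Finset.mem_filter] at ha hb
                exact Fin.ext (by omega))
            have h4 : (Finset.univ.filter (fun v : Fin n => v.val = n - 1)).card ≤ 1 :=
              Finset.card_le_one.mpr (fun a ha b hb => by
                simp only [Finset.mem_filter] at ha hb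
                exact Fin.ext (by omega))
            omega
    omega
  · intro hf
    by_cases hn : n ≤ 2
    · rw [closedContacts, closedContactSet_small n hn]
      simp
    · push_neg at hn
      set G := closedContactGraph n c pos with hG
      have hedge : closedContacts n c pos = G.edgeFinset.card := by
        rw [closedContacts, closedContactSet_eq_edgeSet, ← SimpleGraph.coe_edgeFinset,
          Set.ncard_coe_finset]
      have hhs := SimpleGraph.sum_degrees_eq_twice_card_edges G
      have hdeg0 : ∀ v, c v ≠ true → G.degree v = 0 := by
        intro v hv
        rw [← SimpleGraph.card_neighborFinset_eq_degree, Finset.card_eq_zero,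
          Finset.eq_empty_iff_forall_notMem]
        intro u hu
        rw [SimpleGraph.mem_neighborFinset, hG, closedContactGraph,
          SimpleGraph.fromRel_adj] at hu
        rcases hu.2 with hr | hr
        · exact hv hr.1
        · exact hv hr.2.1
      have hle : ∀ v : Fin n, G.degree v ≤ (if c v = true then 2 else 0) := by
        intro v
        by_cases hv : c v = true
        · rw [if_pos hv]; exact closed_degree_le n hn c pos hf v
        · rw [if_neg hv, hdeg0 v hv]
      have hsum : ∑ v : Fin n, G.degree v ≤ 2 * hCount n c := by
        calc ∑ v : Fin n, G.degree v
            ≤ ∑ v : Fin n, (if c v = true then 2 else 0) :=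
              Finset.sum_le_sum (fun v _ => hle v)
          _ = ∑ v ∈ Finset.univ.filter (fun v => c v = true), 2 :=
              (Finset.sum_filter _ _).symm
          _ = 2 * hCount n c := by
              rw [Finset.sum_const, smul_eq_mul, hCount]; ring
      omega
end

section
/- For every k ≥ 1, any optimal folding of the HP chain (PHP)^{4k} of length 12k (open or closed) has a contact graph consisting of exactly k vertex-disjoint 4-cycles; in particular every optimal folding has exactly 4k contacts. -/
/-- Two foldings are congruent if one is the image of the other under an isometry of ℤ². -/
def LatticeCongruent (n : ℕ) (pos pos' : Fin n → Pt) : Prop :=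
  ∃ T : Pt → Pt, IsLatticeIsometry T ∧ ∀ i, pos' i = T (pos i)

/-! ### Auxiliary development -/

namespace PHPAux

/-- The H-H adjacency relation underlying contacts. -/
def hRel (n : ℕ) (c : Fin n → Bool) (pos : Fin n → Pt) (i j : Fin n) : Prop :=
  c i = true ∧ c j = true ∧ adjPt (pos i) (pos j)

lemma adjPt_symm {p q : Pt} (h : adjPt p q) : adjPt q p := by
  unfold adjPt at *; omega

lemma adjPt_ne {p q : Pt} (h : adjPt p q) : p ≠ q := by
  intro he; subst he; unfold adjPt at h; omega

lemma hRel_symm {n c pos} {i j : Fin n} (h : hRel n c pos i j) : hRel n c pos j i :=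
  ⟨h.2.1, h.1, adjPt_symm h.2.2⟩

lemma hRel_ne {n c pos} {i j : Fin n} (h : hRel n c pos i j) : i ≠ j := by
  intro he; subst he; exact adjPt_ne h.2.2 rfl

/-- The four lattice neighbours of a point. -/
def nbrs (p : Pt) : Finset Pt :=
  {(p.1+1, p.2), (p.1-1, p.2), (p.1, p.2+1), (p.1, p.2-1)}

lemma mem_nbrs {p q : Pt} : q ∈ nbrs p ↔ adjPt p q := by
  obtain ⟨a, b⟩ := p; obtain ⟨x, y⟩ := q
  simp [nbrs, adjPt, Prod.ext_iff]
  omega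

lemma card_nbrs (p : Pt) : (nbrs p).card = 4 := by
  obtain ⟨a, b⟩ := p
  simp [nbrs]
  rw [Finset.card_insert_of_notMem, Finset.card_insert_of_notMem,
      Finset.card_insert_of_notMem] <;> simp [Prod.ext_iff] <;> omega

lemma php_true_iff (n : ℕ) (i : Fin n) : phpLabel n i = true ↔ i.val % 3 = 1 := by
  simp [phpLabel]

end PHPAux

namespace PHPAux

/-- Checkerboard parity along the chain. -/
lemma pos_parity {n : ℕ} {pos : Fin n → Pt} (hf : IsOpenFolding n pos) (hn : 0 < n)
    (i : Fin n) :
    ((pos i).1 + (pos i).2) % 2 = ((pos ⟨0, hn⟩).1 + (pos ⟨0, hn⟩).2 + i.val) % 2 := by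
  obtain ⟨m, hm⟩ := i
  induction m with
  | zero => simp
  | succ l ih =>
      have hl : l < n := by omega
      have hadj := hf.2 ⟨l, hl⟩ ⟨l+1, hm⟩ rfl
      have := ih hl
      unfold adjPt at hadj
      push_cast at *
      omega

lemma hRel_parity {n : ℕ} {c : Fin n → Bool} {pos : Fin n → Pt}
    (hf : IsOpenFolding n pos) (hn : 0 < n) {i j : Fin n} (h : hRel n c pos i j) :
    i.val % 2 ≠ j.val % 2 := by
  have hi := pos_parity hf hn i
  have hj := pos_parity hf hn j
  have hadj := h.2.2
  unfold adjPt at hadj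
  omega

/-- The contact partners of a monomer. -/
noncomputable def partners (n : ℕ) (c : Fin n → Bool) (pos : Fin n → Pt) (i : Fin n) :
    Finset (Fin n) :=
  @Finset.filter _ (fun j => hRel n c pos i j) (Classical.decPred _) Finset.univ

lemma mem_partners {n c pos} {i j : Fin n} : j ∈ partners n c pos i ↔ hRel n c pos i j := by
  simp [partners]

/-- Every H monomer of `(PHP)^{4k}` has at most two contact partners. -/
lemma partners_card_le_two {k : ℕ} (hk : 1 ≤ k) {pos : Fin (12*k) → Pt}
    (hf : IsOpenFolding (12*k) pos) (i : Fin (12*k)) :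
    (partners (12*k) (phpLabel (12*k)) pos i).card ≤ 2 := by
  by_cases hci : phpLabel (12*k) i = true
  · have hi3 : i.val % 3 = 1 := (php_true_iff _ i).1 hci
    have hi1 : 1 ≤ i.val := by omega
    have hi2 : i.val + 1 < 12*k := by have := i.isLt; omega
    set im : Fin (12*k) := ⟨i.val - 1, by omega⟩ with him
    set ip : Fin (12*k) := ⟨i.val + 1, hi2⟩ with hip
    have hadjm : adjPt (pos i) (pos im) := by
      refine adjPt_symm (hf.2 im i ?_); simp [him]; omega
    have hadjp : adjPt (pos i) (pos ip) := hf.2 i ip (by simp [hip])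
    -- partners map injectively into nbrs (pos i) \ {pos im, pos ip}
    have hsub : (partners (12*k) (phpLabel (12*k)) pos i).image pos ⊆
        nbrs (pos i) \ {pos im, pos ip} := by
      intro q hq
      simp only [Finset.mem_image] at hq
      obtain ⟨j, hj, rfl⟩ := hq
      rw [mem_partners] at hj
      have hcj : j.val % 3 = 1 := (php_true_iff _ j).1 hj.2.1
      have hjm : j ≠ im := by
        intro he; rw [he] at hcj; simp [him] at hcj; omega
      have hjp : j ≠ ip := by
        intro he; rw [he] at hcj; simp [hip] at hcj; omega
      rw [Finset.mem_sdiff]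
      constructor
      · exact mem_nbrs.2 hj.2.2
      · simp only [Finset.mem_insert, Finset.mem_singleton]
        push_neg
        exact ⟨fun he => hjm (hf.1 he), fun he => hjp (hf.1 he)⟩
    have hpair : ({pos im, pos ip} : Finset Pt) ⊆ nbrs (pos i) := by
      intro q hq
      simp only [Finset.mem_insert, Finset.mem_singleton] at hq
      rcases hq with rfl | rfl
      · exact mem_nbrs.2 hadjm
      · exact mem_nbrs.2 hadjp
    have himip : pos im ≠ pos ip := by
      intro he
      have : im = ip := hf.1 he
      simp only [him, hip, Fin.ext_iff] at this
      omega
    have hcard2 : ({pos im, pos ip} : Finset Pt).card = 2 := by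
      rw [Finset.card_insert_of_notMem (by simpa using himip)]; simp
    have h1 : ((partners (12*k) (phpLabel (12*k)) pos i).image pos).card ≤ 2 := by
      calc ((partners (12*k) (phpLabel (12*k)) pos i).image pos).card
          ≤ (nbrs (pos i) \ {pos im, pos ip}).card := Finset.card_le_card hsub
        _ = (nbrs (pos i)).card - ({pos im, pos ip} : Finset Pt).card :=
            Finset.card_sdiff_of_subset hpair
        _ ≤ 2 := by rw [card_nbrs, hcard2]
    rwa [Finset.card_image_of_injective _ hf.1] at h1
  · have : partners (12*k) (phpLabel (12*k)) pos i = ∅ := by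
      ext j; rw [mem_partners]; simp [hRel]; intro h; exact absurd h hci
    simp [this]

end PHPAux

namespace PHPAux

lemma not_openAdj_H {n : ℕ} {i j : Fin n} (hi : i.val % 3 = 1) (hj : j.val % 3 = 1) :
    ¬ openAdj n i j := by
  unfold openAdj; omega

lemma not_closedAdj_H {k : ℕ} {i j : Fin (12*k)} (hi : i.val % 3 = 1) (hj : j.val % 3 = 1) :
    ¬ closedAdj (12*k) i j := by
  have hi' := i.isLt
  have hj' := j.isLt
  rintro (h | h)
  · rcases Nat.lt_or_ge (i.val+1) (12*k) with hlt | hge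
    · rw [Nat.mod_eq_of_lt hlt] at h; omega
    · have he : i.val + 1 = 12*k := by omega
      rw [he, Nat.mod_self] at h; omega
  · rcases Nat.lt_or_ge (j.val+1) (12*k) with hlt | hge
    · rw [Nat.mod_eq_of_lt hlt] at h; omega
    · have he : j.val + 1 = 12*k := by omega
      rw [he, Nat.mod_self] at h; omega

lemma openContactRel_iff {k : ℕ} {pos : Fin (12*k) → Pt} {i j : Fin (12*k)} :
    openContactRel (12*k) (phpLabel (12*k)) pos i j ↔ hRel (12*k) (phpLabel (12*k)) pos i j := by
  constructor
  · rintro ⟨h1, h2, _, h4⟩; exact ⟨h1, h2, h4⟩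
  · rintro ⟨h1, h2, h3⟩
    exact ⟨h1, h2, not_openAdj_H ((php_true_iff _ i).1 h1) ((php_true_iff _ j).1 h2), h3⟩

lemma closedContactRel_iff {k : ℕ} {pos : Fin (12*k) → Pt} {i j : Fin (12*k)} :
    closedContactRel (12*k) (phpLabel (12*k)) pos i j ↔ hRel (12*k) (phpLabel (12*k)) pos i j := by
  constructor
  · rintro ⟨h1, h2, _, h4⟩; exact ⟨h1, h2, h4⟩
  · rintro ⟨h1, h2, h3⟩
    exact ⟨h1, h2, not_closedAdj_H ((php_true_iff _ i).1 h1) ((php_true_iff _ j).1 h2), h3⟩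

/-- The contact edges as a finset of unordered pairs. -/
noncomputable def hEdges (n : ℕ) (c : Fin n → Bool) (pos : Fin n → Pt) : Finset (Sym2 (Fin n)) :=
  @Finset.filter _ (fun e => ∃ i j : Fin n, e = s(i, j) ∧ hRel n c pos i j)
    (Classical.decPred _) Finset.univ

lemma mem_hEdges {n c pos} {e : Sym2 (Fin n)} :
    e ∈ hEdges n c pos ↔ ∃ i j : Fin n, e = s(i, j) ∧ hRel n c pos i j := by
  simp [hEdges]

lemma openContactSet_eq {k : ℕ} {pos : Fin (12*k) → Pt} :
    openContactSet (12*k) (phpLabel (12*k)) pos = ↑(hEdges (12*k) (phpLabel (12*k)) pos) := by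
  ext e
  constructor
  · rintro ⟨i, j, rfl, h⟩
    exact Finset.mem_coe.2 (mem_hEdges.2 ⟨i, j, rfl, openContactRel_iff.1 h⟩)
  · intro h
    obtain ⟨i, j, rfl, h'⟩ := mem_hEdges.1 (Finset.mem_coe.1 h)
    exact ⟨i, j, rfl, openContactRel_iff.2 h'⟩

lemma closedContactSet_eq {k : ℕ} {pos : Fin (12*k) → Pt} :
    closedContactSet (12*k) (phpLabel (12*k)) pos = ↑(hEdges (12*k) (phpLabel (12*k)) pos) := by
  ext e
  constructor
  · rintro ⟨i, j, rfl, h⟩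
    exact Finset.mem_coe.2 (mem_hEdges.2 ⟨i, j, rfl, closedContactRel_iff.1 h⟩)
  · intro h
    obtain ⟨i, j, rfl, h'⟩ := mem_hEdges.1 (Finset.mem_coe.1 h)
    exact ⟨i, j, rfl, closedContactRel_iff.2 h'⟩

lemma openContacts_eq {k : ℕ} {pos : Fin (12*k) → Pt} :
    openContacts (12*k) (phpLabel (12*k)) pos = (hEdges (12*k) (phpLabel (12*k)) pos).card := by
  rw [openContacts, openContactSet_eq, Set.ncard_coe_finset]

lemma closedContacts_eq {k : ℕ} {pos : Fin (12*k) → Pt} :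
    closedContacts (12*k) (phpLabel (12*k)) pos = (hEdges (12*k) (phpLabel (12*k)) pos).card := by
  rw [closedContacts, closedContactSet_eq, Set.ncard_coe_finset]

/-- Counting residues in `Fin n`. -/
lemma card_mod_filter {n d r : ℕ} (hd : 0 < d) (hr : r < d) (hdn : d ∣ n) :
    (Finset.univ.filter fun i : Fin n => i.val % d = r).card = n / d := by
  obtain ⟨t, rfl⟩ := hdn
  rw [Nat.mul_div_cancel_left _ hd]
  conv_rhs => rw [← Finset.card_range t]
  apply Finset.card_bij'
    (s := Finset.univ.filter fun i : Fin (d*t) => i.val % d = r)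
    (t := Finset.range t)
    (i := fun (i : Fin (d*t)) _ => i.val / d)
    (j := fun (a : ℕ) ha => (⟨d * a + r, by
      have ha' := Finset.mem_range.1 ha
      have h1 : d * (a+1) ≤ d * t := Nat.mul_le_mul_left d (by omega)
      have h2 : d * (a+1) = d * a + d := by ring
      omega⟩ : Fin (d*t)))
  case hi =>
    intro a ha
    rw [Finset.mem_range, Nat.div_lt_iff_lt_mul hd]
    exact lt_of_lt_of_eq a.isLt (Nat.mul_comm d t)
  case hj =>
    intro a ha
    simp only [Finset.mem_filter, Finset.mem_univ, true_and]
    show (d * a + r) % d = r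
    simp [Nat.mul_add_mod, Nat.mod_eq_of_lt hr]
  case left_inv =>
    intro a ha
    simp only [Finset.mem_filter, Finset.mem_univ, true_and] at ha
    apply Fin.ext
    show d * (a.val / d) + r = a.val
    conv_rhs => rw [← Nat.div_add_mod a.val d]
    rw [ha]
  case right_inv =>
    intro a ha
    show (d * a + r) / d = a
    rw [Nat.mul_add_div hd, Nat.div_eq_of_lt hr]
    omega

end PHPAux

namespace PHPAux

lemma hEdges_subset_biUnion {k : ℕ} {pos : Fin (12*k) → Pt} (hk : 1 ≤ k)
    (hf : IsOpenFolding (12*k) pos) (r : ℕ) (hr : r = 1 ∨ r = 4) :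
    hEdges (12*k) (phpLabel (12*k)) pos ⊆
      (Finset.univ.filter fun o : Fin (12*k) => o.val % 6 = r).biUnion
        (fun o => (partners (12*k) (phpLabel (12*k)) pos o).image fun j => s(o, j)) := by
  intro e he
  obtain ⟨i, j, rfl, hrel⟩ := mem_hEdges.1 he
  have hi3 : i.val % 3 = 1 := (php_true_iff _ i).1 hrel.1
  have hj3 : j.val % 3 = 1 := (php_true_iff _ j).1 hrel.2.1
  have hpar : i.val % 2 ≠ j.val % 2 := hRel_parity hf (by omega) hrel
  have hcase : i.val % 6 = r ∨ j.val % 6 = r := by rcases hr with rfl | rfl <;> omega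
  rcases hcase with hc | hc
  · exact Finset.mem_biUnion.2 ⟨i, by simp [hc],
      Finset.mem_image.2 ⟨j, mem_partners.2 hrel, rfl⟩⟩
  · rw [Sym2.eq_swap]
    exact Finset.mem_biUnion.2 ⟨j, by simp [hc],
      Finset.mem_image.2 ⟨i, mem_partners.2 (hRel_symm hrel), rfl⟩⟩

lemma card_filter_six {k : ℕ} (r : ℕ) (hr : r < 6) :
    (Finset.univ.filter fun o : Fin (12*k) => o.val % 6 = r).card = 2*k := by
  have := card_mod_filter (n := 12*k) (d := 6) (r := r) (by omega) hr ⟨2*k, by ring⟩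
  rw [this]; omega

lemma hEdges_card_le {k : ℕ} {pos : Fin (12*k) → Pt} (hk : 1 ≤ k)
    (hf : IsOpenFolding (12*k) pos) :
    (hEdges (12*k) (phpLabel (12*k)) pos).card ≤ 4*k := by
  calc (hEdges (12*k) (phpLabel (12*k)) pos).card
      ≤ ((Finset.univ.filter fun o : Fin (12*k) => o.val % 6 = 1).biUnion
          (fun o => (partners (12*k) (phpLabel (12*k)) pos o).image fun j => s(o, j))).card :=
        Finset.card_le_card (hEdges_subset_biUnion hk hf 1 (Or.inl rfl))
    _ ≤ ∑ o ∈ Finset.univ.filter fun o : Fin (12*k) => o.val % 6 = 1,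
          ((partners (12*k) (phpLabel (12*k)) pos o).image fun j => s(o, j)).card :=
        Finset.card_biUnion_le
    _ ≤ ∑ o ∈ Finset.univ.filter fun o : Fin (12*k) => o.val % 6 = 1, 2 := by
        apply Finset.sum_le_sum
        intro o _
        exact le_trans Finset.card_image_le (partners_card_le_two hk hf o)
    _ = 4*k := by
        rw [Finset.sum_const, card_filter_six 1 (by omega), smul_eq_mul]
        ring

lemma partners_card_eq_two {k : ℕ} {pos : Fin (12*k) → Pt} (hk : 1 ≤ k)
    (hf : IsOpenFolding (12*k) pos)
    (hcard : (hEdges (12*k) (phpLabel (12*k)) pos).card = 4*k)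
    (i : Fin (12*k)) (hci : phpLabel (12*k) i = true) :
    (partners (12*k) (phpLabel (12*k)) pos i).card = 2 := by
  have hi3 : i.val % 3 = 1 := (php_true_iff _ i).1 hci
  set r : ℕ := if i.val % 2 = 1 then 1 else 4 with hrdef
  have hr : r = 1 ∨ r = 4 := by rw [hrdef]; split <;> simp
  have hi6 : i.val % 6 = r := by rw [hrdef]; split <;> omega
  by_contra hne
  have hle2 := partners_card_le_two hk hf i
  have hlt : (partners (12*k) (phpLabel (12*k)) pos i).card < 2 := by omega
  have h1 : 4*k ≤ ∑ o ∈ Finset.univ.filter fun o : Fin (12*k) => o.val % 6 = r,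
      (partners (12*k) (phpLabel (12*k)) pos o).card := by
    calc 4*k = (hEdges (12*k) (phpLabel (12*k)) pos).card := hcard.symm
      _ ≤ ((Finset.univ.filter fun o : Fin (12*k) => o.val % 6 = r).biUnion
            (fun o => (partners (12*k) (phpLabel (12*k)) pos o).image fun j => s(o, j))).card :=
          Finset.card_le_card (hEdges_subset_biUnion hk hf r hr)
      _ ≤ ∑ o ∈ Finset.univ.filter fun o : Fin (12*k) => o.val % 6 = r,
            ((partners (12*k) (phpLabel (12*k)) pos o).image fun j => s(o, j)).card :=
          Finset.card_biUnion_le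
      _ ≤ _ := Finset.sum_le_sum (fun o _ => Finset.card_image_le)
  have h2 : ∑ o ∈ Finset.univ.filter fun o : Fin (12*k) => o.val % 6 = r,
      (partners (12*k) (phpLabel (12*k)) pos o).card <
      ∑ o ∈ Finset.univ.filter fun o : Fin (12*k) => o.val % 6 = r, 2 := by
    apply Finset.sum_lt_sum
    · intro o _; exact partners_card_le_two hk hf o
    · exact ⟨i, by simp [hi6], hlt⟩
  rw [Finset.sum_const, card_filter_six r (by omega), smul_eq_mul] at h2
  omega

end PHPAux

namespace PHPAux

/-- If an H monomer has two contacts, all four neighbours of its position are occupied: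
by its two chain neighbours and its two contact partners. -/
lemma occupied {k : ℕ} (hk : 1 ≤ k) {pos : Fin (12*k) → Pt}
    (hf : IsOpenFolding (12*k) pos) (i : Fin (12*k))
    (hci : phpLabel (12*k) i = true)
    (hdi : (partners (12*k) (phpLabel (12*k)) pos i).card = 2)
    {q : Pt} (hq : adjPt (pos i) q) :
    ∃ m : Fin (12*k), pos m = q ∧
      ((m.val + 1 = i.val ∨ i.val + 1 = m.val) ∨ hRel (12*k) (phpLabel (12*k)) pos i m) := by
  have hdist : ∀ x y : Fin (12*k), x ≠ y → pos x ≠ pos y :=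
    fun x y hxy he => hxy (hf.1 he)
  obtain ⟨p1, p2, hp12, hpart⟩ := Finset.card_eq_two.1 hdi
  have hp1 : hRel (12*k) (phpLabel (12*k)) pos i p1 := by
    rw [← mem_partners (pos := pos)]; rw [hpart]; simp
  have hp2 : hRel (12*k) (phpLabel (12*k)) pos i p2 := by
    rw [← mem_partners (pos := pos)]; rw [hpart]; simp
  have hi3 : i.val % 3 = 1 := (php_true_iff _ i).1 hci
  have hilt := i.isLt
  have hi2 : i.val + 1 < 12*k := by omega
  set im : Fin (12*k) := ⟨i.val - 1, by omega⟩ with him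
  set ip : Fin (12*k) := ⟨i.val + 1, hi2⟩ with hip
  have hadjm : adjPt (pos i) (pos im) := by
    refine adjPt_symm (hf.2 im i ?_); simp only [him]; omega
  have hadjp : adjPt (pos i) (pos ip) := hf.2 i ip (by simp only [hip])
  have hmod1 : (p1).val % 3 = 1 := (php_true_iff _ _).1 hp1.2.1
  have hmod2 : (p2).val % 3 = 1 := (php_true_iff _ _).1 hp2.2.1
  have hne1m : p1 ≠ im := by
    intro he; have h' : p1.val = i.val - 1 := by rw [he, him]
    omega
  have hne1p : p1 ≠ ip := by
    intro he; have h' : p1.val = i.val + 1 := by rw [he, hip]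
    omega
  have hne2m : p2 ≠ im := by
    intro he; have h' : p2.val = i.val - 1 := by rw [he, him]
    omega
  have hne2p : p2 ≠ ip := by
    intro he; have h' : p2.val = i.val + 1 := by rw [he, hip]
    omega
  have hnemp : im ≠ ip := by
    intro he
    have h1 : im.val = i.val - 1 := by rw [him]
    have h2 : ip.val = i.val + 1 := by rw [hip]
    have h3 : im.val = ip.val := congrArg Fin.val he
    omega
  set F : Finset Pt := {pos im, pos ip, pos p1, pos p2} with hF
  have hsub : F ⊆ nbrs (pos i) := by
    intro x hx
    simp only [hF, Finset.mem_insert, Finset.mem_singleton] at hx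
    rcases hx with rfl | rfl | rfl | rfl
    · exact mem_nbrs.2 hadjm
    · exact mem_nbrs.2 hadjp
    · exact mem_nbrs.2 hp1.2.2
    · exact mem_nbrs.2 hp2.2.2
  have hcard4 : 4 ≤ F.card := by
    rw [hF]
    rw [Finset.card_insert_of_notMem, Finset.card_insert_of_notMem,
        Finset.card_insert_of_notMem, Finset.card_singleton]
    · simp only [Finset.mem_singleton]
      exact hdist p1 p2 hp12
    · simp only [Finset.mem_insert, Finset.mem_singleton]
      push_neg
      exact ⟨hdist ip p1 (Ne.symm hne1p), hdist ip p2 (Ne.symm hne2p)⟩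
    · simp only [Finset.mem_insert, Finset.mem_singleton]
      push_neg
      exact ⟨hdist im ip hnemp, hdist im p1 (Ne.symm hne1m), hdist im p2 (Ne.symm hne2m)⟩
  have hFeq : F = nbrs (pos i) :=
    Finset.eq_of_subset_of_card_le hsub (by rw [card_nbrs]; omega)
  have hqF : q ∈ F := by rw [hFeq]; exact mem_nbrs.2 hq
  simp only [hF, Finset.mem_insert, Finset.mem_singleton] at hqF
  rcases hqF with he | he | he | he
  · exact ⟨im, he.symm, Or.inl (Or.inl (by simp only [him]; omega))⟩
  · exact ⟨ip, he.symm, Or.inl (Or.inr (by simp only [hip]))⟩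
  · exact ⟨p1, he.symm, Or.inr hp1⟩
  · exact ⟨p2, he.symm, Or.inr hp2⟩

/-- At a corner of the contact structure, the diagonal point carries an H monomer in
contact with both arms. -/
lemma corner_square {k : ℕ} (hk : 1 ≤ k) {pos : Fin (12*k) → Pt}
    (hf : IsOpenFolding (12*k) pos)
    (hdeg : ∀ i, phpLabel (12*k) i = true →
      (partners (12*k) (phpLabel (12*k)) pos i).card = 2)
    {v u w : Fin (12*k)}
    (hvu : hRel (12*k) (phpLabel (12*k)) pos v u)
    (hvw : hRel (12*k) (phpLabel (12*k)) pos v w)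
    (hu : pos u = ((pos v).1 + 1, (pos v).2))
    (hw : pos w = ((pos v).1, (pos v).2 + 1)) :
    ∃ z : Fin (12*k), hRel (12*k) (phpLabel (12*k)) pos u z ∧
      hRel (12*k) (phpLabel (12*k)) pos w z ∧
      pos z = ((pos v).1 + 1, (pos v).2 + 1) := by
  set d : Pt := ((pos v).1 + 1, (pos v).2 + 1) with hd
  have hadju : adjPt (pos u) d := by rw [hu]; unfold adjPt; simp [hd]
  have hadjw : adjPt (pos w) d := by rw [hw]; unfold adjPt; simp [hd]
  have hcu : phpLabel (12*k) u = true := hvu.2.1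
  have hcw : phpLabel (12*k) w = true := hvw.2.1
  have hu3 : u.val % 3 = 1 := (php_true_iff _ _).1 hcu
  have hw3 : w.val % 3 = 1 := (php_true_iff _ _).1 hcw
  have huw : u.val ≠ w.val := by
    intro he
    have : u = w := Fin.ext he
    rw [this, hw] at hu
    simp only [Prod.ext_iff] at hu
    omega
  obtain ⟨m, hm, hcase⟩ := occupied hk hf u hcu (hdeg u hcu) hadju
  obtain ⟨m', hm', hcase'⟩ := occupied hk hf w hcw (hdeg w hcw) hadjw
  have hmm : m' = m := hf.1 (by rw [hm, hm'])
  rw [hmm] at hm' hcase'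
  rcases hcase with hch | hrel
  · -- m is a chain neighbour of u, hence a P; then from w's side we get a contradiction
    have hmP : m.val % 3 ≠ 1 := by omega
    rcases hcase' with hch' | hrel'
    · omega
    · exact absurd ((php_true_iff _ _).1 hrel'.2.1) hmP
  · exact ⟨m, hrel, ⟨hcw, hrel.2.1, by rw [hm]; exact hadjw⟩, hm⟩

end PHPAux

namespace PHPAux

set_option maxHeartbeats 1000000 in
/-- Main structural induction: a contact-closed set of H monomers, in a folding where
every H monomer has exactly two contacts, splits into disjoint 4-cycles (squares). -/
lemma squares_induction {k : ℕ} (hk : 1 ≤ k) {pos : Fin (12*k) → Pt}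
    (hf : IsOpenFolding (12*k) pos)
    (hdeg : ∀ i, phpLabel (12*k) i = true →
      (partners (12*k) (phpLabel (12*k)) pos i).card = 2) :
    ∀ N (A : Finset (Fin (12*k))), A.card ≤ N →
      (∀ a ∈ A, phpLabel (12*k) a = true) →
      (∀ a ∈ A, ∀ j, hRel (12*k) (phpLabel (12*k)) pos a j → j ∈ A) →
      ∃ m, A.card = 4*m ∧ ∃ f : Fin m × Fin 4 → Fin (12*k), Function.Injective f ∧
        (∀ q i, f (q, i) ∈ A) ∧
        (∀ a b, (a ∈ A ∧ hRel (12*k) (phpLabel (12*k)) pos a b) ↔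
          ∃ q : Fin m, ∃ i j : Fin 4, a = f (q, i) ∧ b = f (q, j) ∧
            ((i.val + 1) % 4 = j.val ∨ (j.val + 1) % 4 = i.val)) := by
  have hne_pos : ∀ (x y : Fin (12*k)), pos x ≠ pos y → x ≠ y :=
    fun x y h he => h (congrArg pos he)
  intro N
  induction N with
  | zero =>
    intro A hcard hlab hclo
    have hA : A = ∅ := Finset.card_eq_zero.1 (by omega)
    subst hA
    refine ⟨0, by simp, fun p => p.1.elim0, ?_, ?_, ?_⟩
    · intro p; exact p.1.elim0
    · intro q; exact q.elim0
    · intro a b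
      constructor
      · rintro ⟨ha, _⟩; simp at ha
      · rintro ⟨q, _⟩; exact q.elim0
  | succ N ih =>
    intro A hcard hlab hclo
    rcases Finset.eq_empty_or_nonempty A with hA | hne
    · subst hA
      refine ⟨0, by simp, fun p => p.1.elim0, ?_, ?_, ?_⟩
      · intro p; exact p.1.elim0
      · intro q; exact q.elim0
      · intro a b
        constructor
        · rintro ⟨ha, _⟩; simp at ha
        · rintro ⟨q, _⟩; exact q.elim0
    · obtain ⟨v, hvA, hvmin⟩ := Finset.exists_min_image A (fun a => toLex (pos a)) hne
      have hcv := hlab v hvA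
      have hdv := hdeg v hcv
      obtain ⟨p1, p2, hp12, hpart⟩ := Finset.card_eq_two.1 hdv
      have hp1 : hRel (12*k) (phpLabel (12*k)) pos v p1 := by
        rw [← mem_partners (pos := pos), hpart]; simp
      have hp2 : hRel (12*k) (phpLabel (12*k)) pos v p2 := by
        rw [← mem_partners (pos := pos), hpart]; simp
      have key : ∀ p, hRel (12*k) (phpLabel (12*k)) pos v p →
          (pos p = ((pos v).1 + 1, (pos v).2) ∨ pos p = ((pos v).1, (pos v).2 + 1)) := by
        intro p hp
        have hpA : p ∈ A := hclo v hvA p hp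
        have hmin : toLex (pos v) ≤ toLex (pos p) := hvmin p hpA
        have h4 := mem_nbrs.2 hp.2.2
        simp only [nbrs, Finset.mem_insert, Finset.mem_singleton] at h4
        rcases h4 with h | h | h | h
        · exact Or.inl h
        · exfalso
          have h1 : (pos v).1 < (pos p).1 ∨ (pos v).1 = (pos p).1 ∧ (pos v).2 ≤ (pos p).2 :=
            Prod.Lex.le_iff.1 hmin
          rw [h] at h1
          simp only [] at h1
          rcases h1 with h1 | ⟨h1, h2⟩ <;> omega
        · exact Or.inr h
        · exfalso
          have h1 : (pos v).1 < (pos p).1 ∨ (pos v).1 = (pos p).1 ∧ (pos v).2 ≤ (pos p).2 :=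
            Prod.Lex.le_iff.1 hmin
          rw [h] at h1
          simp only [] at h1
          rcases h1 with h1 | ⟨h1, h2⟩ <;> omega
      obtain ⟨u, w, hpuw, huE, hwN⟩ : ∃ u w,
          partners (12*k) (phpLabel (12*k)) pos v = {u, w} ∧
          pos u = ((pos v).1 + 1, (pos v).2) ∧ pos w = ((pos v).1, (pos v).2 + 1) := by
        rcases key p1 hp1 with h1 | h1 <;> rcases key p2 hp2 with h2 | h2
        · exact absurd (hf.1 (h1.trans h2.symm)) hp12
        · exact ⟨p1, p2, hpart, h1, h2⟩
        · exact ⟨p2, p1, by rw [hpart, Finset.pair_comm], h2, h1⟩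
        · exact absurd (hf.1 (h1.trans h2.symm)) hp12
      have hvu : hRel (12*k) (phpLabel (12*k)) pos v u := by
        rw [← mem_partners (pos := pos), hpuw]; simp
      have hvw : hRel (12*k) (phpLabel (12*k)) pos v w := by
        rw [← mem_partners (pos := pos), hpuw]; simp
      obtain ⟨z, huz, hwz, hzD⟩ := corner_square hk hf hdeg hvu hvw huE hwN
      -- distinctness
      have hne_vu : v ≠ u := hne_pos v u (by
        rw [huE]; intro h; rw [Prod.ext_iff] at h; simp only [] at h; omega)
      have hne_vw : v ≠ w := hne_pos v w (by
        rw [hwN]; intro h; rw [Prod.ext_iff] at h; simp only [] at h; omega)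
      have hne_vz : v ≠ z := hne_pos v z (by
        rw [hzD]; intro h; rw [Prod.ext_iff] at h; simp only [] at h; omega)
      have hne_uw : u ≠ w := hne_pos u w (by
        rw [huE, hwN]; intro h; rw [Prod.ext_iff] at h; simp only [] at h; omega)
      have hne_uz : u ≠ z := hne_pos u z (by
        rw [huE, hzD]; intro h; rw [Prod.ext_iff] at h; simp only [] at h; omega)
      have hne_wz : w ≠ z := hne_pos w z (by
        rw [hwN, hzD]; intro h; rw [Prod.ext_iff] at h; simp only [] at h; omega)
      -- partner sets of the four corners
      have hpv : partners (12*k) (phpLabel (12*k)) pos v = {u, w} := hpuw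
      have pair_eq : ∀ (x y y' : Fin (12*k)),
          hRel (12*k) (phpLabel (12*k)) pos x y →
          hRel (12*k) (phpLabel (12*k)) pos x y' → y ≠ y' →
          partners (12*k) (phpLabel (12*k)) pos x = {y, y'} := by
        intro x y y' hy hy' hyy
        have hsub : ({y, y'} : Finset (Fin (12*k))) ⊆ partners (12*k) (phpLabel (12*k)) pos x := by
          intro t ht
          simp only [Finset.mem_insert, Finset.mem_singleton] at ht
          rcases ht with rfl | rfl
          · exact mem_partners.2 hy
          · exact mem_partners.2 hy'
        have hc2 : ({y, y'} : Finset (Fin (12*k))).card = 2 := by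
          rw [Finset.card_insert_of_notMem (by simpa using hyy), Finset.card_singleton]
        have hcx : (partners (12*k) (phpLabel (12*k)) pos x).card = 2 :=
          hdeg x hy.1
        exact (Finset.eq_of_subset_of_card_le hsub (by omega)).symm
      have hpu : partners (12*k) (phpLabel (12*k)) pos u = {v, z} :=
        pair_eq u v z (hRel_symm hvu) huz hne_vz
      have hpw : partners (12*k) (phpLabel (12*k)) pos w = {v, z} :=
        pair_eq w v z (hRel_symm hvw) hwz hne_vz
      have hpz : partners (12*k) (phpLabel (12*k)) pos z = {u, w} :=
        pair_eq z u w (hRel_symm huz) (hRel_symm hwz) hne_uw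
      -- the square Q
      set Q : Finset (Fin (12*k)) := {v, u, z, w} with hQ
      have hQclosed : ∀ x ∈ Q, ∀ y, hRel (12*k) (phpLabel (12*k)) pos x y → y ∈ Q := by
        intro x hx y hy
        simp only [hQ, Finset.mem_insert, Finset.mem_singleton] at hx ⊢
        have hymem : y ∈ partners (12*k) (phpLabel (12*k)) pos x := mem_partners.2 hy
        rcases hx with rfl | rfl | rfl | rfl
        · rw [hpv] at hymem; simp only [Finset.mem_insert, Finset.mem_singleton] at hymem
          tauto
        · rw [hpu] at hymem; simp only [Finset.mem_insert, Finset.mem_singleton] at hymem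
          tauto
        · rw [hpz] at hymem; simp only [Finset.mem_insert, Finset.mem_singleton] at hymem
          tauto
        · rw [hpw] at hymem; simp only [Finset.mem_insert, Finset.mem_singleton] at hymem
          tauto
      have hQsub : Q ⊆ A := by
        intro x hx
        simp only [hQ, Finset.mem_insert, Finset.mem_singleton] at hx
        rcases hx with rfl | rfl | rfl | rfl
        · exact hvA
        · exact hclo v hvA x hvu
        · exact hclo u (hclo v hvA u hvu) x huz
        · exact hclo v hvA x hvw
      have hQcard : Q.card = 4 := by
        rw [hQ]
        rw [Finset.card_insert_of_notMem, Finset.card_insert_of_notMem,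
            Finset.card_insert_of_notMem, Finset.card_singleton]
        · simp only [Finset.mem_singleton]; exact fun h => hne_wz h.symm
        · simp only [Finset.mem_insert, Finset.mem_singleton]; push_neg
          exact ⟨hne_uz, hne_uw⟩
        · simp only [Finset.mem_insert, Finset.mem_singleton]; push_neg
          exact ⟨hne_vu, hne_vz, hne_vw⟩
      set A' : Finset (Fin (12*k)) := A \ Q with hA'
      have hA'card : A'.card = A.card - 4 := by rw [hA', Finset.card_sdiff_of_subset hQsub, hQcard]
      have hA4 : 4 ≤ A.card := hQcard ▸ Finset.card_le_card hQsub
      have hlab' : ∀ a ∈ A', phpLabel (12*k) a = true :=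
        fun a ha => hlab a (Finset.mem_sdiff.1 ha).1
      have hclo' : ∀ a ∈ A', ∀ j, hRel (12*k) (phpLabel (12*k)) pos a j → j ∈ A' := by
        intro a ha j hj
        rw [Finset.mem_sdiff] at ha ⊢
        refine ⟨hclo a ha.1 j hj, ?_⟩
        intro hjQ
        exact ha.2 (hQclosed j hjQ a (hRel_symm hj))
      obtain ⟨m', hm'card, f', hf'inj, hf'mem, hf'iff⟩ :=
        ih A' (by omega) hlab' hclo'
      -- the cyclic order on the new square
      set cyc : Fin 4 → Fin (12*k) := ![v, u, z, w] with hcyc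
      have hcyc0 : cyc 0 = v := rfl
      have hcyc1 : cyc 1 = u := rfl
      have hcyc2 : cyc 2 = z := rfl
      have hcyc3 : cyc 3 = w := rfl
      have hcycQ : ∀ i : Fin 4, cyc i ∈ Q := by
        intro i
        fin_cases i <;> simp [hQ, hcyc]
      have hcycA : ∀ i : Fin 4, cyc i ∈ A := fun i => hQsub (hcycQ i)
      have hcycinj : Function.Injective cyc := by
        intro a b hab
        fin_cases a <;> fin_cases b <;> first
          | rfl
          | (exfalso; revert hab
             simp only [hcyc0, hcyc1, hcyc2, hcyc3]
             first
               | exact hne_vu | exact hne_vw | exact hne_vz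
               | exact hne_uw | exact hne_uz | exact hne_wz
               | exact fun h => hne_vu h.symm | exact fun h => hne_vw h.symm
               | exact fun h => hne_vz h.symm | exact fun h => hne_uw h.symm
               | exact fun h => hne_uz h.symm | exact fun h => hne_wz h.symm)
      have hf'Q : ∀ (q : Fin m') (i : Fin 4), f' (q, i) ∉ Q := by
        intro q i hmem
        exact (Finset.mem_sdiff.1 (hf'mem q i)).2 hmem
      refine ⟨m' + 1, by omega, fun p =>
        Fin.cases (motive := fun _ => Fin (12*k)) (cyc p.2) (fun q' => f' (q', p.2)) p.1,
        ?_, ?_, ?_⟩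
      · -- injectivity
        rintro ⟨qa, ia⟩ ⟨qb, ib⟩ hab
        rcases Fin.eq_zero_or_eq_succ qa with rfl | ⟨qa', rfl⟩ <;>
          rcases Fin.eq_zero_or_eq_succ qb with rfl | ⟨qb', rfl⟩
        · simp only [Fin.cases_zero] at hab
          rw [Prod.mk.injEq]
          exact ⟨rfl, hcycinj hab⟩
        · simp only [Fin.cases_zero, Fin.cases_succ] at hab
          exact absurd (hab ▸ hcycQ ia) (hf'Q qb' ib)
        · simp only [Fin.cases_zero, Fin.cases_succ] at hab
          exact absurd (hab ▸ hf'Q qa' ia) (fun hn => hn (hcycQ ib))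
        · simp only [Fin.cases_succ] at hab
          have := hf'inj hab
          rw [Prod.mk.injEq] at this ⊢
          exact ⟨by rw [this.1], this.2⟩
      · -- membership
        intro q i
        rcases Fin.eq_zero_or_eq_succ q with rfl | ⟨q', rfl⟩
        · simpa only [Fin.cases_zero] using hcycA i
        · simp only [Fin.cases_succ]
          exact (Finset.mem_sdiff.1 (hf'mem q' i)).1
      · -- the adjacency characterisation
        intro a b
        constructor
        · rintro ⟨haA, hrel⟩
          by_cases haQ : a ∈ Q
          · have hbmem : b ∈ partners (12*k) (phpLabel (12*k)) pos a := mem_partners.2 hrel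
            simp only [hQ, Finset.mem_insert, Finset.mem_singleton] at haQ
            rcases haQ with rfl | rfl | rfl | rfl
            · rw [hpv] at hbmem
              simp only [Finset.mem_insert, Finset.mem_singleton] at hbmem
              rcases hbmem with rfl | rfl
              · exact ⟨0, 0, 1, by simp [Fin.cases_zero, hcyc0], by simp [Fin.cases_zero, hcyc1],
                  Or.inl rfl⟩
              · exact ⟨0, 0, 3, by simp [Fin.cases_zero, hcyc0], by simp [Fin.cases_zero, hcyc3],
                  Or.inr rfl⟩
            · rw [hpu] at hbmem
              simp only [Finset.mem_insert, Finset.mem_singleton] at hbmem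
              rcases hbmem with rfl | rfl
              · exact ⟨0, 1, 0, by simp [Fin.cases_zero, hcyc1], by simp [Fin.cases_zero, hcyc0],
                  Or.inr rfl⟩
              · exact ⟨0, 1, 2, by simp [Fin.cases_zero, hcyc1], by simp [Fin.cases_zero, hcyc2],
                  Or.inl rfl⟩
            · rw [hpz] at hbmem
              simp only [Finset.mem_insert, Finset.mem_singleton] at hbmem
              rcases hbmem with rfl | rfl
              · exact ⟨0, 2, 1, by simp [Fin.cases_zero, hcyc2], by simp [Fin.cases_zero, hcyc1],
                  Or.inr rfl⟩
              · exact ⟨0, 2, 3, by simp [Fin.cases_zero, hcyc2], by simp [Fin.cases_zero, hcyc3],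
                  Or.inl rfl⟩
            · rw [hpw] at hbmem
              simp only [Finset.mem_insert, Finset.mem_singleton] at hbmem
              rcases hbmem with rfl | rfl
              · exact ⟨0, 3, 0, by simp [Fin.cases_zero, hcyc3], by simp [Fin.cases_zero, hcyc0],
                  Or.inl rfl⟩
              · exact ⟨0, 3, 2, by simp [Fin.cases_zero, hcyc3], by simp [Fin.cases_zero, hcyc2],
                  Or.inr rfl⟩
          · have haA' : a ∈ A' := Finset.mem_sdiff.2 ⟨haA, haQ⟩
            obtain ⟨q, i, j, ha, hb, hcond⟩ := (hf'iff a b).1 ⟨haA', hrel⟩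
            exact ⟨q.succ, i, j, by simp [Fin.cases_succ, ha], by simp [Fin.cases_succ, hb], hcond⟩
        · rintro ⟨q, i, j, rfl, rfl, hcond⟩
          rcases Fin.eq_zero_or_eq_succ q with rfl | ⟨q', rfl⟩
          · simp only [Fin.cases_zero]
            refine ⟨hcycA i, ?_⟩
            fin_cases i <;> fin_cases j <;>
              first
                | (exact absurd hcond (by decide))
                | (simp only [hcyc0, hcyc1, hcyc2, hcyc3]; assumption)
                | (simp only [hcyc0, hcyc1, hcyc2, hcyc3]
                   first
                     | exact hvu | exact hvw | exact hRel_symm hvu | exact huz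
                     | exact hRel_symm huz | exact hRel_symm hwz | exact hwz
                     | exact hRel_symm hvw)
          · simp only [Fin.cases_succ]
            have := (hf'iff _ _).2 ⟨q', i, j, rfl, rfl, hcond⟩
            exact ⟨(Finset.mem_sdiff.1 this.1).1, this.2⟩

end PHPAux

namespace PHPAux

/-- Horizontal offset pattern within a 6-block. -/
def tX (r : ℕ) : ℤ :=
  if r = 0 then 0 else if r ≤ 2 then 1 else if r ≤ 4 then 2 else 3

/-- Vertical offset pattern within a 6-block. -/
def tY (r : ℕ) : ℤ := if r = 2 ∨ r = 3 then 1 else 0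

/-- The standard optimal closed folding of `(PHP)^{4k}`: `k` blocks marching east in a top
row of bumps, then back west in a mirrored bottom row. -/
def fold (k : ℕ) : Fin (12*k) → Pt := fun i =>
  if i.val < 6*k then
    (4*(((i.val/6 : ℕ)) : ℤ) + tX (i.val % 6), tY (i.val % 6))
  else
    (4*(k:ℤ) - 1 - (4*((((i.val - 6*k)/6 : ℕ)) : ℤ) + tX ((i.val - 6*k) % 6)),
     -1 - tY ((i.val - 6*k) % 6))

lemma fold_top {k : ℕ} {i : Fin (12*k)} (h : i.val < 6*k) :
    fold k i = (4*(((i.val/6 : ℕ)) : ℤ) + tX (i.val % 6), tY (i.val % 6)) := by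
  unfold fold; rw [if_pos h]

lemma fold_bot {k : ℕ} {i : Fin (12*k)} (h : ¬ (i.val < 6*k)) :
    fold k i = (4*(k:ℤ) - 1 - (4*((((i.val - 6*k)/6 : ℕ)) : ℤ) + tX ((i.val - 6*k) % 6)),
     -1 - tY ((i.val - 6*k) % 6)) := by
  unfold fold; rw [if_neg h]

lemma tY_bounds (r : ℕ) : 0 ≤ tY r ∧ tY r ≤ 1 := by
  unfold tY; split <;> norm_num

lemma tXY_inj {r r' : ℕ} (hr : r < 6) (hr' : r' < 6) {m m' : ℕ}
    (h1 : 4*(m:ℤ) + tX r = 4*(m':ℤ) + tX r') (h2 : tY r = tY r') : m = m' ∧ r = r' := by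
  interval_cases r <;> interval_cases r' <;>
    simp only [tX, tY] at h1 h2 <;> norm_num at h1 h2 <;> omega

lemma fold_injective (k : ℕ) : Function.Injective (fold k) := by
  intro i j h
  rcases Nat.lt_or_ge i.val (6*k) with hi | hi <;> rcases Nat.lt_or_ge j.val (6*k) with hj | hj
  · rw [fold_top hi, fold_top hj, Prod.ext_iff] at h
    obtain ⟨h1, h2⟩ := h
    simp only [] at h1 h2
    obtain ⟨he1, he2⟩ := tXY_inj (Nat.mod_lt _ (by omega)) (Nat.mod_lt _ (by omega)) h1 h2
    apply Fin.ext
    omega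
  · rw [fold_top hi, fold_bot (by omega), Prod.ext_iff] at h
    obtain ⟨h1, h2⟩ := h
    simp only [] at h2
    have b1 := tY_bounds (i.val % 6)
    have b2 := tY_bounds ((j.val - 6*k) % 6)
    omega
  · rw [fold_bot (by omega), fold_top hj, Prod.ext_iff] at h
    obtain ⟨h1, h2⟩ := h
    simp only [] at h2
    have b1 := tY_bounds ((i.val - 6*k) % 6)
    have b2 := tY_bounds (j.val % 6)
    omega
  · rw [fold_bot (by omega), fold_bot (by omega), Prod.ext_iff] at h
    obtain ⟨h1, h2⟩ := h
    simp only [] at h1 h2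
    have h1' : 4*(((i.val - 6*k)/6 : ℕ) : ℤ) + tX ((i.val - 6*k) % 6) =
        4*(((j.val - 6*k)/6 : ℕ) : ℤ) + tX ((j.val - 6*k) % 6) := by omega
    have h2' : tY ((i.val - 6*k) % 6) = tY ((j.val - 6*k) % 6) := by omega
    obtain ⟨he1, he2⟩ := tXY_inj (Nat.mod_lt _ (by omega)) (Nat.mod_lt _ (by omega)) h1' h2'
    have hi' := i.isLt
    have hj' := j.isLt
    apply Fin.ext
    omega

lemma tX_step {r : ℕ} (hr : r < 5) :
    (tX (r+1) - tX r).natAbs + (tY (r+1) - tY r).natAbs = 1 := by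
  interval_cases r <;> decide

lemma fold_closed (k : ℕ) (hk : 1 ≤ k) : IsClosedFolding (12*k) (fold k) := by
  refine ⟨fold_injective k, ?_⟩
  intro i j hij
  have hilt := i.isLt
  have hjlt := j.isLt
  rcases Nat.lt_or_ge (i.val + 1) (12*k) with hlt | hge
  · rw [Nat.mod_eq_of_lt hlt] at hij
    -- j = i+1
    rcases Nat.lt_or_ge (i.val + 1) (6*k) with hti | hti
    · -- both top
      have hi : i.val < 6*k := by omega
      rw [fold_top hi, fold_top (by omega : j.val < 6*k)]
      rcases Nat.lt_or_ge (i.val % 6) 5 with hr | hr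
      · have hj6 : j.val / 6 = i.val / 6 := by omega
        have hjr : j.val % 6 = i.val % 6 + 1 := by omega
        rw [hj6, hjr]
        have := tX_step hr
        unfold adjPt
        simp only []
        omega
      · have hr5 : i.val % 6 = 5 := by omega
        have hj6 : j.val / 6 = i.val / 6 + 1 := by omega
        have hjr : j.val % 6 = 0 := by omega
        rw [hj6, hjr, hr5]
        unfold adjPt tX tY
        norm_num
        omega
    · rcases Nat.lt_or_ge i.val (6*k) with hi | hi
      · -- i at top boundary, j at bottom start
        have hi5 : i.val = 6*k - 1 := by omega
        have hj0 : j.val = 6*k := by omega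
        rw [fold_top hi, fold_bot (by omega)]
        have h1 : i.val % 6 = 5 := by omega
        have h2 : i.val / 6 = k - 1 := by omega
        have h3 : (j.val - 6*k) % 6 = 0 := by omega
        have h4 : (j.val - 6*k) / 6 = 0 := by omega
        rw [h1, h2, h3, h4]
        unfold adjPt tX tY
        norm_num
        omega
      · -- both bottom
        rw [fold_bot (by omega), fold_bot (by omega)]
        set a := i.val - 6*k with ha
        have hja : j.val - 6*k = a + 1 := by omega
        rw [hja]
        rcases Nat.lt_or_ge (a % 6) 5 with hr | hr
        · have hj6 : (a+1) / 6 = a / 6 := by omega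
          have hjr : (a+1) % 6 = a % 6 + 1 := by omega
          rw [hj6, hjr]
          have := tX_step hr
          unfold adjPt
          simp only []
          omega
        · have hr5 : a % 6 = 5 := by omega
          have hj6 : (a+1) / 6 = a / 6 + 1 := by omega
          have hjr : (a+1) % 6 = 0 := by omega
          rw [hj6, hjr, hr5]
          unfold adjPt tX tY
          norm_num
          omega
  · -- wrap-around: i = 12k-1, j = 0
    have hi12 : i.val = 12*k - 1 := by omega
    have hj0 : j.val = 0 := by
      have : i.val + 1 = 12*k := by omega
      rw [this, Nat.mod_self] at hij
      omega
    rw [fold_bot (by omega), fold_top (by omega : j.val < 6*k)]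
    have h1 : (i.val - 6*k) % 6 = 5 := by omega
    have h2 : (i.val - 6*k) / 6 = k - 1 := by omega
    rw [h1, h2, hj0]
    unfold adjPt tX tY
    norm_num
    omega

lemma fold_open (k : ℕ) (hk : 1 ≤ k) : IsOpenFolding (12*k) (fold k) := by
  refine ⟨fold_injective k, ?_⟩
  intro i j hij
  exact (fold_closed k hk).2 i j (by rw [hij, Nat.mod_eq_of_lt j.isLt])

/-- Evaluation of the fold at top block positions. -/
lemma fold_top_eval (k m r : ℕ) (hr : r < 6) (h : 6*m + r < 6*k) :
    fold k ⟨6*m + r, by omega⟩ = (4*(m:ℤ) + tX r, tY r) := by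
  rw [fold_top (by simpa using h)]
  have h1 : (6*m + r) / 6 = m := by omega
  have h2 : (6*m + r) % 6 = r := by omega
  simp only [h1, h2]

/-- Evaluation of the fold at bottom block positions. -/
lemma fold_bot_eval (k m r : ℕ) (hr : r < 6) (hm : m < k) :
    fold k ⟨6*k + 6*m + r, by omega⟩ =
      (4*(k:ℤ) - 1 - (4*(m:ℤ) + tX r), -1 - tY r) := by
  rw [fold_bot (by simp; omega)]
  have h1 : (6*k + 6*m + r - 6*k) / 6 = m := by omega
  have h2 : (6*k + 6*m + r - 6*k) % 6 = r := by omega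
  simp only [h1, h2]

end PHPAux

namespace PHPAux

def ia1 (k : ℕ) (m : Fin k) : Fin (12*k) := ⟨6*m.val+1, by have := m.isLt; omega⟩
def ia2 (k : ℕ) (m : Fin k) : Fin (12*k) := ⟨6*m.val+4, by have := m.isLt; omega⟩
def ib1 (k : ℕ) (m : Fin k) : Fin (12*k) := ⟨6*k+6*(k-1-m.val)+1, by have := m.isLt; omega⟩
def ib2 (k : ℕ) (m : Fin k) : Fin (12*k) := ⟨6*k+6*(k-1-m.val)+4, by have := m.isLt; omega⟩

lemma fold_ia1 (k : ℕ) (m : Fin k) : fold k (ia1 k m) = (4*(m.val:ℤ)+1, 0) := by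
  have h : fold k (⟨6*m.val+1, by have := m.isLt; omega⟩ : Fin (12*k)) = (4*(m.val:ℤ) + tX 1, tY 1) :=
    fold_top_eval k m.val 1 (by omega) (by have := m.isLt; omega)
  show fold k (⟨6*m.val+1, by have := m.isLt; omega⟩ : Fin (12*k)) = (4*(m.val:ℤ)+1, 0)
  rw [h]
  norm_num [tX, tY]

lemma fold_ia2 (k : ℕ) (m : Fin k) : fold k (ia2 k m) = (4*(m.val:ℤ)+2, 0) := by
  have h : fold k (⟨6*m.val+4, by have := m.isLt; omega⟩ : Fin (12*k)) = (4*(m.val:ℤ) + tX 4, tY 4) :=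
    fold_top_eval k m.val 4 (by omega) (by have := m.isLt; omega)
  show fold k (⟨6*m.val+4, by have := m.isLt; omega⟩ : Fin (12*k)) = (4*(m.val:ℤ)+2, 0)
  rw [h]
  norm_num [tX, tY]

lemma fold_ib1 (k : ℕ) (m : Fin k) : fold k (ib1 k m) = (4*(m.val:ℤ)+2, -1) := by
  have h : fold k (⟨6*k+6*(k-1-m.val)+1, by have := m.isLt; omega⟩ : Fin (12*k)) =
      (4*(k:ℤ) - 1 - (4*(((k-1-m.val : ℕ)):ℤ) + tX 1), -1 - tY 1) :=
    fold_bot_eval k (k-1-m.val) 1 (by omega) (by have := m.isLt; omega)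
  show fold k (⟨6*k+6*(k-1-m.val)+1, by have := m.isLt; omega⟩ : Fin (12*k)) = (4*(m.val:ℤ)+2, -1)
  rw [h]
  have hm := m.isLt
  rw [Prod.mk.injEq]
  unfold tX tY
  norm_num
  omega

lemma fold_ib2 (k : ℕ) (m : Fin k) : fold k (ib2 k m) = (4*(m.val:ℤ)+1, -1) := by
  have h : fold k (⟨6*k+6*(k-1-m.val)+4, by have := m.isLt; omega⟩ : Fin (12*k)) =
      (4*(k:ℤ) - 1 - (4*(((k-1-m.val : ℕ)):ℤ) + tX 4), -1 - tY 4) :=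
    fold_bot_eval k (k-1-m.val) 4 (by omega) (by have := m.isLt; omega)
  show fold k (⟨6*k+6*(k-1-m.val)+4, by have := m.isLt; omega⟩ : Fin (12*k)) = (4*(m.val:ℤ)+1, -1)
  rw [h]
  have hm := m.isLt
  rw [Prod.mk.injEq]
  unfold tX tY
  norm_num
  omega

lemma php_ia1 (k : ℕ) (m : Fin k) : phpLabel (12*k) (ia1 k m) = true := by
  rw [php_true_iff]; show (6*m.val+1) % 3 = 1; omega
lemma php_ia2 (k : ℕ) (m : Fin k) : phpLabel (12*k) (ia2 k m) = true := by
  rw [php_true_iff]; show (6*m.val+4) % 3 = 1; omega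
lemma php_ib1 (k : ℕ) (m : Fin k) : phpLabel (12*k) (ib1 k m) = true := by
  rw [php_true_iff]; show (6*k+6*(k-1-m.val)+1) % 3 = 1; omega
lemma php_ib2 (k : ℕ) (m : Fin k) : phpLabel (12*k) (ib2 k m) = true := by
  rw [php_true_iff]; show (6*k+6*(k-1-m.val)+4) % 3 = 1; omega

lemma rel_e0 (k : ℕ) (m : Fin k) :
    hRel (12*k) (phpLabel (12*k)) (fold k) (ia1 k m) (ia2 k m) := by
  refine ⟨php_ia1 k m, php_ia2 k m, ?_⟩
  rw [fold_ia1, fold_ia2]; unfold adjPt; simp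

lemma rel_e1 (k : ℕ) (m : Fin k) :
    hRel (12*k) (phpLabel (12*k)) (fold k) (ia1 k m) (ib2 k m) := by
  refine ⟨php_ia1 k m, php_ib2 k m, ?_⟩
  rw [fold_ia1, fold_ib2]; unfold adjPt; simp

lemma rel_e2 (k : ℕ) (m : Fin k) :
    hRel (12*k) (phpLabel (12*k)) (fold k) (ib1 k m) (ib2 k m) := by
  refine ⟨php_ib1 k m, php_ib2 k m, ?_⟩
  rw [fold_ib1, fold_ib2]; unfold adjPt; simp

lemma rel_e3 (k : ℕ) (m : Fin k) :
    hRel (12*k) (phpLabel (12*k)) (fold k) (ia2 k m) (ib1 k m) := by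
  refine ⟨php_ia2 k m, php_ib1 k m, ?_⟩
  rw [fold_ia2, fold_ib1]; unfold adjPt; simp

def gEdge (k : ℕ) : Fin k × Fin 4 → Sym2 (Fin (12*k)) := fun p =>
  if p.2.val = 0 then s(ia1 k p.1, ia2 k p.1)
  else if p.2.val = 1 then s(ia1 k p.1, ib2 k p.1)
  else if p.2.val = 2 then s(ib1 k p.1, ib2 k p.1)
  else s(ia2 k p.1, ib1 k p.1)

lemma gEdge_mem (k : ℕ) (p : Fin k × Fin 4) :
    gEdge k p ∈ hEdges (12*k) (phpLabel (12*k)) (fold k) := by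
  obtain ⟨m, e⟩ := p
  unfold gEdge
  fin_cases e
  · exact mem_hEdges.2 ⟨_, _, rfl, rel_e0 k m⟩
  · exact mem_hEdges.2 ⟨_, _, rfl, rel_e1 k m⟩
  · exact mem_hEdges.2 ⟨_, _, rfl, rel_e2 k m⟩
  · exact mem_hEdges.2 ⟨_, _, rfl, rel_e3 k m⟩

lemma gEdge_inj (k : ℕ) : Function.Injective (gEdge k) := by
  intro p q h
  obtain ⟨m, e⟩ := p
  obtain ⟨m', e'⟩ := q
  have hm := m.isLt
  have hm' := m'.isLt
  fin_cases e <;> fin_cases e' <;>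
    simp only [gEdge, ia1, ia2, ib1, ib2, Sym2.eq_iff, Fin.mk.injEq] at h <;>
    norm_num at h <;>
    [skip; skip; skip; skip; skip; skip; skip; skip; skip; skip; skip; skip; skip; skip;
     skip; skip] <;>
    (try rcases h with ⟨h1, h2⟩ | ⟨h1, h2⟩) <;>
    (first
      | (exfalso; omega)
      | (rw [Prod.mk.injEq]; exact ⟨Fin.ext (by omega), rfl⟩))

lemma fold_contacts_ge (k : ℕ) (hk : 1 ≤ k) :
    4*k ≤ (hEdges (12*k) (phpLabel (12*k)) (fold k)).card := by
  have h1 : (Finset.univ.image (gEdge k)).card = 4*k := by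
    rw [Finset.card_image_of_injective _ (gEdge_inj k)]
    simp [Finset.card_univ]
    ring
  have h2 : Finset.univ.image (gEdge k) ⊆ hEdges (12*k) (phpLabel (12*k)) (fold k) := by
    intro e he
    obtain ⟨p, _, rfl⟩ := Finset.mem_image.1 he
    exact gEdge_mem k p
  calc 4*k = (Finset.univ.image (gEdge k)).card := h1.symm
    _ ≤ _ := Finset.card_le_card h2

end PHPAux

namespace PHPAux

lemma closed_to_open {n : ℕ} {pos : Fin n → Pt} (h : IsClosedFolding n pos) :
    IsOpenFolding n pos :=
  ⟨h.1, fun i j hij => h.2 i j (by rw [hij]; exact Nat.mod_eq_of_lt j.isLt)⟩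

/-- Core structure theorem: if a folding of `(PHP)^{4k}` attains `4k` contacts, the contact
relation decomposes into `k` disjoint squares. -/
lemma structure_core {k : ℕ} (hk : 1 ≤ k) {pos : Fin (12*k) → Pt}
    (hf : IsOpenFolding (12*k) pos)
    (hcard : (hEdges (12*k) (phpLabel (12*k)) pos).card = 4*k) :
    ∃ f : Fin k × Fin 4 → Fin (12*k), Function.Injective f ∧
      ∀ a b, hRel (12*k) (phpLabel (12*k)) pos a b ↔
        ∃ q : Fin k, ∃ i j : Fin 4, a = f (q, i) ∧ b = f (q, j) ∧
          ((i.val + 1) % 4 = j.val ∨ (j.val + 1) % 4 = i.val) := by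
  have hdeg := partners_card_eq_two hk hf hcard
  set A : Finset (Fin (12*k)) := Finset.univ.filter (fun i => phpLabel (12*k) i = true)
    with hA
  have hAcard : A.card = 4*k := by
    have heq : A = Finset.univ.filter (fun i : Fin (12*k) => i.val % 3 = 1) := by
      rw [hA]
      exact Finset.filter_congr (fun i _ => by simp [php_true_iff])
    rw [heq, card_mod_filter (by omega) (by omega) ⟨4*k, by ring⟩]
    omega
  have hlab : ∀ a ∈ A, phpLabel (12*k) a = true := by
    intro a ha; rw [hA, Finset.mem_filter] at ha; exact ha.2
  have hclo : ∀ a ∈ A, ∀ j, hRel (12*k) (phpLabel (12*k)) pos a j → j ∈ A := by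
    intro a _ j hj
    rw [hA, Finset.mem_filter]
    exact ⟨Finset.mem_univ _, hj.2.1⟩
  obtain ⟨m, hm, f, finj, fmem, fiff⟩ :=
    squares_induction hk hf hdeg A.card A le_rfl hlab hclo
  have hmk : m = k := by omega
  subst hmk
  refine ⟨f, finj, ?_⟩
  intro a b
  constructor
  · intro hrel
    exact (fiff a b).1 ⟨by rw [hA, Finset.mem_filter]; exact ⟨Finset.mem_univ _, hrel.1⟩, hrel⟩
  · intro hex
    exact ((fiff a b).2 hex).2

lemma four_cycles_open {k : ℕ} (hk : 1 ≤ k) {pos : Fin (12*k) → Pt}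
    (hf : IsOpenFolding (12*k) pos)
    (hcard : (hEdges (12*k) (phpLabel (12*k)) pos).card = 4*k) :
    IsDisjointUnionOfFourCycles (openContactGraph (12*k) (phpLabel (12*k)) pos) k := by
  obtain ⟨f, finj, fiff⟩ := structure_core hk hf hcard
  refine ⟨f, finj, ?_⟩
  intro a b
  rw [openContactGraph, SimpleGraph.fromRel_adj]
  constructor
  · rintro ⟨hab, h | h⟩
    · exact (fiff a b).1 (openContactRel_iff.1 h)
    · exact (fiff a b).1 (hRel_symm (openContactRel_iff.1 h))
  · intro hex
    have hrel := (fiff a b).2 hex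
    exact ⟨hRel_ne hrel, Or.inl (openContactRel_iff.2 hrel)⟩

lemma four_cycles_closed {k : ℕ} (hk : 1 ≤ k) {pos : Fin (12*k) → Pt}
    (hf : IsOpenFolding (12*k) pos)
    (hcard : (hEdges (12*k) (phpLabel (12*k)) pos).card = 4*k) :
    IsDisjointUnionOfFourCycles (closedContactGraph (12*k) (phpLabel (12*k)) pos) k := by
  obtain ⟨f, finj, fiff⟩ := structure_core hk hf hcard
  refine ⟨f, finj, ?_⟩
  intro a b
  rw [closedContactGraph, SimpleGraph.fromRel_adj]
  constructor
  · rintro ⟨hab, h | h⟩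
    · exact (fiff a b).1 (closedContactRel_iff.1 h)
    · exact (fiff a b).1 (hRel_symm (closedContactRel_iff.1 h))
  · intro hex
    have hrel := (fiff a b).2 hex
    exact ⟨hRel_ne hrel, Or.inl (closedContactRel_iff.2 hrel)⟩

end PHPAux

open PHPAux in
/-- For every `k ≥ 1`, any optimal folding of the HP chain `(PHP)^{4k}` of
length `12k` (open or closed) has a contact graph consisting of exactly `k` vertex-disjoint
4-cycles; in particular every optimal folding has exactly `4k` contacts. -/
theorem php_optimal_folding_contactGraph_four_cycles
    (k : ℕ) (hk : 1 ≤ k) (pos : Fin (12*k) → Pt) :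
    (OpenOptimal (12*k) (phpLabel (12*k)) pos →
      IsDisjointUnionOfFourCycles (openContactGraph (12*k) (phpLabel (12*k)) pos) k ∧
      openContacts (12*k) (phpLabel (12*k)) pos = 4*k) ∧
    (ClosedOptimal (12*k) (phpLabel (12*k)) pos →
      IsDisjointUnionOfFourCycles (closedContactGraph (12*k) (phpLabel (12*k)) pos) k ∧
      closedContacts (12*k) (phpLabel (12*k)) pos = 4*k) := by
  constructor
  · rintro ⟨hfold, hmax⟩
    have hub : (hEdges (12*k) (phpLabel (12*k)) pos).card ≤ 4*k := hEdges_card_le hk hfold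
    have hlb : 4*k ≤ openContacts (12*k) (phpLabel (12*k)) pos := by
      have h1 := hmax (fold k) (fold_open k hk)
      have h2 : 4*k ≤ openContacts (12*k) (phpLabel (12*k)) (fold k) := by
        rw [openContacts_eq]; exact fold_contacts_ge k hk
      omega
    have heq : openContacts (12*k) (phpLabel (12*k)) pos =
        (hEdges (12*k) (phpLabel (12*k)) pos).card := openContacts_eq
    have hcard : (hEdges (12*k) (phpLabel (12*k)) pos).card = 4*k := by omega
    exact ⟨four_cycles_open hk hfold hcard, by omega⟩
  · rintro ⟨hfold, hmax⟩
    have hfold' : IsOpenFolding (12*k) pos := closed_to_open hfold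
    have hub : (hEdges (12*k) (phpLabel (12*k)) pos).card ≤ 4*k := hEdges_card_le hk hfold'
    have hlb : 4*k ≤ closedContacts (12*k) (phpLabel (12*k)) pos := by
      have h1 := hmax (fold k) (fold_closed k hk)
      have h2 : 4*k ≤ closedContacts (12*k) (phpLabel (12*k)) (fold k) := by
        rw [closedContacts_eq]; exact fold_contacts_ge k hk
      omega
    have heq : closedContacts (12*k) (phpLabel (12*k)) pos =
        (hEdges (12*k) (phpLabel (12*k)) pos).card := closedContacts_eq
    have hcard : (hEdges (12*k) (phpLabel (12*k)) pos).card = 4*k := by omega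
    exact ⟨four_cycles_closed hk hfold' hcard, by omega⟩
end

section
/- For every k ≥ 1, the folding F_k of the closed HP chain S_k has exactly k−1 contacts; consequently every optimal folding of S_k has at least k−1 contacts. -/
/-! ### Auxiliary material for Statement 6 -/

namespace FkAux

/-- Closed form for the positions of the folding `F_k`. -/
def fpt (k m : ℕ) : Pt :=
  if m = 0 then ((0 : ℤ), (0 : ℤ))
  else if m % 2 = 1 then
    if m / 2 ≤ k / 2 then (((m / 2 : ℕ) : ℤ) + 1, -((m / 2 : ℕ) : ℤ))
    else ((k : ℤ) - ((m / 2 : ℕ) : ℤ), ((m / 2 : ℕ) : ℤ) - k - 1)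
  else
    if m / 2 ≤ k / 2 then (((m / 2 : ℕ) : ℤ) + 1, 1 - ((m / 2 : ℕ) : ℤ))
    else ((k : ℤ) + 1 - ((m / 2 : ℕ) : ℤ), ((m / 2 : ℕ) : ℤ) - k - 1)

set_option maxHeartbeats 2000000 in
lemma fpt_step (k m : ℕ) (hm : m ≤ 2 * k) :
    fpt k m + fkDir k m = fpt k (m + 1) := by
  unfold fpt fkDir
  split_ifs
  all_goals simp only [Prod.mk_add_mk, Prod.mk.injEq]
  all_goals first
    | exact False.elim ‹False›
    | exact ⟨by omega, by omega⟩

lemma fkPos_eq (k : ℕ) (i : Fin (2 * k + 2)) : fkPos k i = fpt k i.val := by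
  have h : ∀ m, m ≤ 2 * k + 1 → (∑ j ∈ Finset.range m, fkDir k j) = fpt k m := by
    intro m
    induction m with
    | zero => intro _; simp [fpt]; rfl
    | succ m ih =>
      intro hm
      rw [Finset.sum_range_succ, ih (by omega), fpt_step k m (by omega)]
  have hi := i.isLt
  exact h i.val (by omega)

lemma skLabel_iff (k : ℕ) (i : Fin (2 * k + 2)) :
    skLabel k i = true ↔
      ((i.val ≤ 2 * ((k + 1) / 2) ∧ i.val % 2 = 1) ∨
        (2 * ((k + 1) / 2) < i.val ∧ i.val % 2 = 0)) := by
  unfold skLabel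
  split_ifs with h
  all_goals simp only [decide_eq_true_eq]
  all_goals omega

lemma closedAdj_iff (k : ℕ) (i j : Fin (2 * k + 2)) :
    closedAdj (2 * k + 2) i j ↔
      (i.val + 1 = j.val ∨ j.val + 1 = i.val ∨
        (i.val = 2 * k + 1 ∧ j.val = 0) ∨ (j.val = 2 * k + 1 ∧ i.val = 0)) := by
  have hi := i.isLt
  have hj := j.isLt
  have key : ∀ a : ℕ, a < 2 * k + 2 →
      (a + 1) % (2 * k + 2) = if a = 2 * k + 1 then 0 else a + 1 := by
    intro a ha
    split_ifs with h
    · rw [h]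
      have : 2 * k + 1 + 1 = 2 * k + 2 := by omega
      rw [this, Nat.mod_self]
    · exact Nat.mod_eq_of_lt (by omega)
  unfold closedAdj
  rw [key i.val hi, key j.val hj]
  split_ifs
  all_goals omega

/-- The arithmetic description of a contact of `F_k` (ordered so that the first
index is on the lower staircase). -/
def Ck (k a b : ℕ) : Prop :=
  a % 2 = 1 ∧ ((a + b = 2 * k + 1 ∧ a + 1 ≤ k) ∨ (a + b = 2 * k + 3 ∧ 3 ≤ a ∧ a ≤ k))

set_option maxHeartbeats 2000000 in
lemma adj_to_C (k a b : ℕ) (hk : 1 ≤ k) (ha : a < 2 * k + 2) (hb : b < 2 * k + 2)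
    (hca : (a ≤ 2 * ((k + 1) / 2) ∧ a % 2 = 1) ∨ (2 * ((k + 1) / 2) < a ∧ a % 2 = 0))
    (hcb : (b ≤ 2 * ((k + 1) / 2) ∧ b % 2 = 1) ∨ (2 * ((k + 1) / 2) < b ∧ b % 2 = 0))
    (hpt : adjPt (fpt k a) (fpt k b)) : Ck k a b ∨ Ck k b a := by
  unfold Ck
  unfold fpt adjPt at hpt
  split_ifs at hpt
  all_goals first
    | exact False.elim ‹False›
    | (dsimp only at hpt; omega)

set_option maxHeartbeats 2000000 in
lemma C_to_adj (k a b : ℕ) (hk : 1 ≤ k) (ha : a < 2 * k + 2) (hb : b < 2 * k + 2)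
    (hC : Ck k a b) : adjPt (fpt k a) (fpt k b) := by
  unfold Ck at hC
  unfold fpt adjPt
  split_ifs
  all_goals first
    | exact False.elim ‹False›
    | (dsimp only; omega)

lemma C_labels (k a b : ℕ) (hk : 1 ≤ k) (hb : b < 2 * k + 2) (hC : Ck k a b) :
    (a ≤ 2 * ((k + 1) / 2) ∧ a % 2 = 1) ∧ (2 * ((k + 1) / 2) < b ∧ b % 2 = 0) := by
  unfold Ck at hC
  omega

lemma C_not_adj (k : ℕ) (i j : Fin (2 * k + 2)) (hk : 1 ≤ k)
    (hC : Ck k i.val j.val) : ¬ closedAdj (2 * k + 2) i j := by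
  rw [closedAdj_iff]
  unfold Ck at hC
  omega

lemma contact_iff (k : ℕ) (hk : 1 ≤ k) (i j : Fin (2 * k + 2)) :
    closedContactRel (2 * k + 2) (skLabel k) (fkPos k) i j ↔
      (Ck k i.val j.val ∨ Ck k j.val i.val) := by
  constructor
  · rintro ⟨hi, hj, _, hpt⟩
    rw [skLabel_iff] at hi hj
    rw [fkPos_eq, fkPos_eq] at hpt
    exact adj_to_C k i.val j.val hk i.isLt j.isLt hi hj hpt
  · intro h
    rcases h with hC | hC
    · obtain ⟨hla, hlb⟩ := C_labels k i.val j.val hk j.isLt hC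
      refine ⟨(skLabel_iff k i).mpr (Or.inl hla), (skLabel_iff k j).mpr (Or.inr hlb),
        C_not_adj k i j hk hC, ?_⟩
      rw [fkPos_eq, fkPos_eq]
      exact C_to_adj k i.val j.val hk i.isLt j.isLt hC
    · obtain ⟨hla, hlb⟩ := C_labels k j.val i.val hk i.isLt hC
      refine ⟨(skLabel_iff k i).mpr (Or.inr hlb), (skLabel_iff k j).mpr (Or.inl hla),
        fun hadj => C_not_adj k j i hk hC (by
          rw [closedAdj_iff] at hadj ⊢; omega), ?_⟩
      rw [fkPos_eq, fkPos_eq]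
      have := C_to_adj k j.val i.val hk j.isLt i.isLt hC
      unfold adjPt at this ⊢
      omega

set_option maxHeartbeats 2000000 in
lemma fpt_inj (k a b : ℕ) (ha : a < 2 * k + 2) (hb : b < 2 * k + 2)
    (h : fpt k a = fpt k b) : a = b := by
  unfold fpt at h
  split_ifs at h
  all_goals first
    | exact False.elim ‹False›
    | (rw [Prod.mk.injEq] at h; omega)

lemma fkDir_unit (k j : ℕ) : (fkDir k j).1.natAbs + (fkDir k j).2.natAbs = 1 := by
  unfold fkDir
  split_ifs <;> rfl

set_option maxHeartbeats 2000000 in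
lemma fk_folding (k : ℕ) (hk : 1 ≤ k) : IsClosedFolding (2 * k + 2) (fkPos k) := by
  constructor
  · intro i j h
    rw [fkPos_eq, fkPos_eq] at h
    exact Fin.ext (fpt_inj k i.val j.val i.isLt j.isLt h)
  · intro i j hij
    have hi := i.isLt
    rcases Nat.lt_or_ge (i.val + 1) (2 * k + 2) with h | h
    · have hj : j.val = i.val + 1 := by rw [← hij, Nat.mod_eq_of_lt h]
      have hsum : fkPos k j = fkPos k i + fkDir k i.val := by
        unfold fkPos
        rw [hj, Finset.sum_range_succ]
      rw [hsum]
      have hu := fkDir_unit k i.val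
      unfold adjPt
      simp only [Prod.fst_add, Prod.snd_add]
      omega
    · have hival : i.val = 2 * k + 1 := by omega
      have hj : j.val = 0 := by
        rw [← hij, hival]
        have : 2 * k + 1 + 1 = 2 * k + 2 := by omega
        rw [this, Nat.mod_self]
      have h1 : fkPos k i = ((0 : ℤ), (-1 : ℤ)) := by
        rw [fkPos_eq, hival]
        unfold fpt
        split_ifs
        all_goals first
          | exact False.elim ‹False›
          | exact ⟨by omega, by omega⟩
          | (rw [Prod.mk.injEq]; exact ⟨by omega, by omega⟩)
      have h2 : fkPos k j = ((0 : ℤ), (0 : ℤ)) := by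
        rw [fkPos_eq, hj]
        unfold fpt
        simp
      rw [h1, h2]
      unfold adjPt
      norm_num

/-- The lower endpoint of the `t`-th contact. -/
def ckA (k : ℕ) (t : Fin (k - 1)) : Fin (2 * k + 2) :=
  ⟨t.val + 1 + t.val % 2, by have := t.isLt; omega⟩

/-- The upper endpoint of the `t`-th contact. -/
def ckB (k : ℕ) (t : Fin (k - 1)) : Fin (2 * k + 2) :=
  ⟨2 * k - t.val + t.val % 2, by have := t.isLt; omega⟩

lemma range_eq (k : ℕ) (hk : 1 ≤ k) :
    closedContactSet (2 * k + 2) (skLabel k) (fkPos k)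
      = Set.range (fun t : Fin (k - 1) => s(ckA k t, ckB k t)) := by
  have key : ∀ i j : Fin (2 * k + 2), Ck k i.val j.val →
      ∃ t : Fin (k - 1), s(ckA k t, ckB k t) = s(i, j) := by
    intro i j hC
    obtain ⟨hodd, hC2⟩ := hC
    rcases hC2 with ⟨hsum, hle⟩ | ⟨hsum, h3, hle⟩
    · refine ⟨⟨i.val - 1, by omega⟩, ?_⟩
      have h1 : ckA k ⟨i.val - 1, by omega⟩ = i := Fin.ext (by
        show i.val - 1 + 1 + (i.val - 1) % 2 = i.val; omega)
      have h2 : ckB k ⟨i.val - 1, by omega⟩ = j := Fin.ext (by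
        show 2 * k - (i.val - 1) + (i.val - 1) % 2 = j.val; omega)
      rw [h1, h2]
    · refine ⟨⟨i.val - 2, by omega⟩, ?_⟩
      have h1 : ckA k ⟨i.val - 2, by omega⟩ = i := Fin.ext (by
        show i.val - 2 + 1 + (i.val - 2) % 2 = i.val; omega)
      have h2 : ckB k ⟨i.val - 2, by omega⟩ = j := Fin.ext (by
        show 2 * k - (i.val - 2) + (i.val - 2) % 2 = j.val; omega)
      rw [h1, h2]
  ext e
  constructor
  · rintro ⟨i, j, rfl, hrel⟩
    rw [contact_iff k hk] at hrel
    rcases hrel with hC | hC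
    · obtain ⟨t, ht⟩ := key i j hC
      exact ⟨t, ht⟩
    · obtain ⟨t, ht⟩ := key j i hC
      exact ⟨t, ht.trans Sym2.eq_swap⟩
  · rintro ⟨t, rfl⟩
    refine ⟨ckA k t, ckB k t, rfl, (contact_iff k hk _ _).mpr (Or.inl ?_)⟩
    have ht := t.isLt
    unfold Ck
    show (t.val + 1 + t.val % 2) % 2 = 1 ∧ _
    constructor
    · omega
    · show (t.val + 1 + t.val % 2) + (2 * k - t.val + t.val % 2) = 2 * k + 1 ∧
          (t.val + 1 + t.val % 2) + 1 ≤ k ∨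
          (t.val + 1 + t.val % 2) + (2 * k - t.val + t.val % 2) = 2 * k + 3 ∧
          3 ≤ t.val + 1 + t.val % 2 ∧ t.val + 1 + t.val % 2 ≤ k
      omega

lemma cpair_inj (k : ℕ) :
    Function.Injective (fun t : Fin (k - 1) => s(ckA k t, ckB k t)) := by
  intro t t' h
  simp only [Sym2.eq, Sym2.rel_iff', Prod.mk.injEq, Prod.swap_prod_mk] at h
  have hA : ∀ s : Fin (k - 1), (ckA k s).val = s.val + 1 + s.val % 2 := fun _ => rfl
  have hB : ∀ s : Fin (k - 1), (ckB k s).val = 2 * k - s.val + s.val % 2 := fun _ => rfl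
  have ht := t.isLt
  have ht' := t'.isLt
  rcases h with ⟨h1, h2⟩ | ⟨h1, h2⟩ <;>
    apply Fin.ext <;>
    [ (have e1 := congrArg Fin.val h1; have e2 := congrArg Fin.val h2;
       rw [hA, hA] at e1; rw [hB, hB] at e2; omega);
      (have e1 := congrArg Fin.val h1; have e2 := congrArg Fin.val h2;
       rw [hA, hB] at e1; rw [hB, hA] at e2; omega)]

lemma fk_count (k : ℕ) (hk : 1 ≤ k) :
    closedContacts (2 * k + 2) (skLabel k) (fkPos k) = k - 1 := by
  rw [closedContacts, range_eq k hk, ← Set.image_univ,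
    Set.ncard_image_of_injective _ (cpair_inj k), Set.ncard_univ,
    Nat.card_eq_fintype_card, Fintype.card_fin]

end FkAux

/-- For every `k ≥ 1`, the folding `F_k` of the closed HP chain `S_k` has
exactly `k - 1` contacts; consequently every optimal folding of `S_k` has at least `k - 1`
contacts. -/
theorem fk_has_k_sub_one_contacts (k : ℕ) (hk : 1 ≤ k) :
    IsClosedFolding (2*k+2) (fkPos k) ∧
    closedContacts (2*k+2) (skLabel k) (fkPos k) = k - 1 ∧
    ∀ pos : Fin (2*k+2) → Pt, ClosedOptimal (2*k+2) (skLabel k) pos →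
      k - 1 ≤ closedContacts (2*k+2) (skLabel k) pos := by
  refine ⟨FkAux.fk_folding k hk, FkAux.fk_count k hk, ?_⟩
  intro pos hopt
  have h := hopt.2 (fkPos k) (FkAux.fk_folding k hk)
  rw [FkAux.fk_count k hk] at h
  exact h
end

section
/- For every k ≥ 1, the standard folding of the open HP chain Z_{2k} — with the PP edge horizontal, the two edges adjacent to it directed down, the remaining edges right of the PP edge alternately directed right and down, and the remaining edges left of the PP edge alternately directed down and right — has exactly four missing contacts, all of them external. -/
/-! ## Auxiliary machinery for the standard folding of `Z_{2k}` -/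

/-- Closed-form x-coordinate of monomer `m` of the standard folding of `Z_{2k}`. -/
def gx (k m : ℕ) : ℤ := if m ≤ 2*k then -((m/2 : ℕ) : ℤ) else -(k:ℤ) + (((m - (2*k+1))/2 : ℕ) : ℤ)

/-- Closed-form y-coordinate. -/
def gy (k m : ℕ) : ℤ := if m ≤ 2*k then (((m+1)/2 : ℕ) : ℤ) else (k:ℤ) - 1 - (((m - 2*k)/2 : ℕ) : ℤ)

lemma sum_dir (k : ℕ) (hk : 1 ≤ k) (m : ℕ) :
    (∑ j ∈ Finset.range m, stdZDir k j) = (gx k m, gy k m) := by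
  induction m with
  | zero => simp [gx, gy]; rfl
  | succ m ih =>
    rw [Finset.sum_range_succ, ih]
    unfold stdZDir gx gy
    split_ifs <;> simp [Prod.ext_iff] <;> push_cast <;> omega

lemma stdZPos_eq (k : ℕ) (hk : 1 ≤ k) (i : Fin (4*k)) :
    stdZPos k i = (gx k i.val, gy k i.val) :=
  sum_dir k hk i.val

lemma g_bounds (k m : ℕ) (h : m < 4*k) :
    -(k:ℤ) ≤ gx k m ∧ gx k m ≤ 0 ∧ 0 ≤ gy k m ∧ gy k m ≤ k := by
  unfold gx gy; split_ifs <;> refine ⟨by omega, by omega, by omega, by omega⟩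

lemma gInj (k : ℕ) (i j : ℕ)
    (hx : gx k i = gx k j) (hy : gy k i = gy k j) : i = j := by
  unfold gx at hx; unfold gy at hy; split_ifs at hx hy <;> omega

lemma zLabel_mk (k : ℕ) (u : ℕ) (h : u < 4*k)
    (h2 : (u < 2*k ∧ u % 2 = 0) ∨ (¬(u < 2*k) ∧ u % 2 = 1)) : zLabel k ⟨u, h⟩ = true := by
  unfold zLabel; dsimp only; split_ifs with h3 <;> simp only [decide_eq_true_eq] <;> omega

lemma pmk : ∀ (a b : ℤ) (q : Pt), a = q.1 → b = q.2 → ((a,b) : Pt) = q := by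
  intro a b q h1 h2; cases q; simp_all

set_option maxHeartbeats 1600000 in
lemma mcs_subset (k : ℕ) (hk : 1 ≤ k) (v : Fin (4*k)) (q : Pt)
    (hmem : (v, q) ∈ missingContactSet (4*k) (zLabel k) (stdZPos k)) :
    (v.val = 0 ∧ q.1 = 1 ∧ q.2 = 0) ∨ (v.val = 0 ∧ q.1 = 0 ∧ q.2 = -1) ∨
    (v.val = 2*k+1 ∧ q.1 = -(k:ℤ)-1 ∧ q.2 = (k:ℤ)-1) ∨
    (v.val = 4*k-1 ∧ q.1 = -1 ∧ q.2 = -1) := by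
  have hpos : ∀ i : Fin (4*k), stdZPos k i = (gx k i.val, gy k i.val) := stdZPos_eq k hk
  obtain ⟨hH, hadj, hnb, hnH⟩ := hmem
  rw [hpos] at hadj
  replace hadj : (gx k v.val - q.1).natAbs + (gy k v.val - q.2).natAbs = 1 := hadj
  have hnbN : ∀ w : ℕ, ∀ hw : w < 4*k, (v.val + 1 = w ∨ w + 1 = v.val) →
      (gx k w, gy k w) ≠ q := by
    intro w hw hor heq
    exact hnb ⟨w, hw⟩ hor (by rw [hpos]; exact heq)
  have hnHN : ∀ u : ℕ, ∀ hu : u < 4*k, zLabel k ⟨u, hu⟩ = true →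
      (gx k u, gy k u) ≠ q := by
    intro u hu hl heq
    exact hnH ⟨u, hu⟩ hl (by rw [hpos]; exact heq)
  have hvlt := v.isLt
  clear hnb hnH hpos
  by_cases hv : v.val < 2*k
  · have hHm : v.val % 2 = 0 := by
      unfold zLabel at hH; rw [if_pos hv] at hH; simpa using hH
    obtain ⟨m, hm, hmk⟩ : ∃ m, v.val = 2*m ∧ m < k := ⟨v.val/2, by omega, by omega⟩
    have hgx : gx k v.val = -(m:ℤ) := by unfold gx; split_ifs <;> omega
    have hgy : gy k v.val = (m:ℤ) := by unfold gy; split_ifs <;> omega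
    rw [hgx, hgy] at hadj
    clear hH hgx hgy
    have hq4 : (q.1 = -(m:ℤ)+1 ∧ q.2 = m) ∨ (q.1 = -(m:ℤ)-1 ∧ q.2 = m) ∨
        (q.1 = -(m:ℤ) ∧ q.2 = (m:ℤ)+1) ∨ (q.1 = -(m:ℤ) ∧ q.2 = (m:ℤ)-1) := by omega
    clear hadj
    rcases hq4 with ⟨hq1, hq2⟩ | ⟨hq1, hq2⟩ | ⟨hq1, hq2⟩ | ⟨hq1, hq2⟩
    · rcases Nat.eq_zero_or_pos m with hm0 | hm0
      · omega
      · exact absurd (pmk _ _ q (by unfold gx; split_ifs <;> omega)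
          (by unfold gy; split_ifs <;> omega)) (hnbN (2*m-1) (by omega) (by omega))
    · exact absurd (pmk _ _ q (by unfold gx; split_ifs <;> omega)
        (by unfold gy; split_ifs <;> omega))
        (hnHN (4*k-2*m-1) (by omega) (zLabel_mk k _ (by omega) (Or.inr ⟨by omega, by omega⟩)))
    · exact absurd (pmk _ _ q (by unfold gx; split_ifs <;> omega)
        (by unfold gy; split_ifs <;> omega)) (hnbN (2*m+1) (by omega) (by omega))
    · rcases Nat.eq_zero_or_pos m with hm0 | hm0
      · omega
      · exact absurd (pmk _ _ q (by unfold gx; split_ifs <;> omega)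
          (by unfold gy; split_ifs <;> omega))
          (hnHN (4*k-2*m+1) (by omega) (zLabel_mk k _ (by omega) (Or.inr ⟨by omega, by omega⟩)))
  · have hHm : v.val % 2 = 1 := by
      unfold zLabel at hH; rw [if_neg hv] at hH; simpa using hH
    obtain ⟨t, ht, htk⟩ : ∃ t, v.val = 2*k+2*t+1 ∧ t < k :=
      ⟨(v.val-(2*k+1))/2, by omega, by omega⟩
    have hgx : gx k v.val = -(k:ℤ)+t := by unfold gx; split_ifs <;> omega
    have hgy : gy k v.val = (k:ℤ)-1-t := by unfold gy; split_ifs <;> omega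
    rw [hgx, hgy] at hadj
    clear hH hgx hgy
    have hq4 : (q.1 = -(k:ℤ)+t+1 ∧ q.2 = (k:ℤ)-1-t) ∨ (q.1 = -(k:ℤ)+t-1 ∧ q.2 = (k:ℤ)-1-t) ∨
        (q.1 = -(k:ℤ)+t ∧ q.2 = (k:ℤ)-t) ∨ (q.1 = -(k:ℤ)+t ∧ q.2 = (k:ℤ)-2-t) := by omega
    clear hadj
    rcases hq4 with ⟨hq1, hq2⟩ | ⟨hq1, hq2⟩ | ⟨hq1, hq2⟩ | ⟨hq1, hq2⟩
    · exact absurd (pmk _ _ q (by unfold gx; split_ifs <;> omega)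
        (by unfold gy; split_ifs <;> omega))
        (hnHN (2*(k-1-t)) (by omega) (zLabel_mk k _ (by omega) (Or.inl ⟨by omega, by omega⟩)))
    · rcases Nat.eq_zero_or_pos t with ht0 | ht0
      · omega
      · exact absurd (pmk _ _ q (by unfold gx; split_ifs <;> omega)
          (by unfold gy; split_ifs <;> omega)) (hnbN (2*k+2*t) (by omega) (by omega))
    · rcases Nat.eq_zero_or_pos t with ht0 | ht0
      · exact absurd (pmk _ _ q (by unfold gx; split_ifs <;> omega)
          (by unfold gy; split_ifs <;> omega)) (hnbN (2*k) (by omega) (by omega))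
      · exact absurd (pmk _ _ q (by unfold gx; split_ifs <;> omega)
          (by unfold gy; split_ifs <;> omega))
          (hnHN (2*(k-t)) (by omega) (zLabel_mk k _ (by omega) (Or.inl ⟨by omega, by omega⟩)))
    · rcases Nat.lt_or_ge t (k-1) with ht0 | ht0
      · exact absurd (pmk _ _ q (by unfold gx; split_ifs <;> omega)
          (by unfold gy; split_ifs <;> omega)) (hnbN (2*k+2*t+2) (by omega) (by omega))
      · omega

lemma std_fold (k : ℕ) (hk : 1 ≤ k) : IsOpenFolding (4*k) (stdZPos k) := by
  have hpos : ∀ i : Fin (4*k), stdZPos k i = (gx k i.val, gy k i.val) := stdZPos_eq k hk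
  constructor
  · intro i j hij
    rw [hpos, hpos, Prod.mk.injEq] at hij
    exact Fin.ext (gInj k i.val j.val hij.1 hij.2)
  · intro i j hij
    rw [hpos, hpos]
    show (gx k i.val - gx k j.val).natAbs + (gy k i.val - gy k j.val).natAbs = 1
    unfold gx gy
    split_ifs <;> omega

lemma mcs_mem (k : ℕ) (hk : 1 ≤ k) (vv : ℕ) (hvv : vv < 4*k) (q : Pt)
    (hlab : (vv < 2*k ∧ vv % 2 = 0) ∨ (¬(vv < 2*k) ∧ vv % 2 = 1))
    (hadj : (gx k vv - q.1).natAbs + (gy k vv - q.2).natAbs = 1)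
    (hout : ∀ u : ℕ, u < 4*k → (gx k u, gy k u) ≠ q) :
    ((⟨vv, hvv⟩ : Fin (4*k)), q) ∈ missingContactSet (4*k) (zLabel k) (stdZPos k) := by
  have hpos : ∀ i : Fin (4*k), stdZPos k i = (gx k i.val, gy k i.val) := stdZPos_eq k hk
  refine ⟨zLabel_mk k vv hvv hlab, ?_, ?_, ?_⟩
  · rw [hpos]; exact hadj
  · intro w hw heq
    exact hout w.val w.isLt (by rw [← hpos]; exact heq)
  · intro u hl heq
    exact hout u.val u.isLt (by rw [← hpos]; exact heq)

set_option maxHeartbeats 1600000 in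
lemma mcs_eq (k : ℕ) (hk : 1 ≤ k) (h0 : 0 < 4*k) (h1 : 2*k+1 < 4*k) (h2 : 4*k-1 < 4*k) :
    missingContactSet (4*k) (zLabel k) (stdZPos k) =
      {((⟨0, h0⟩ : Fin (4*k)), ((1:ℤ), (0:ℤ))), ((⟨0, h0⟩ : Fin (4*k)), ((0:ℤ), (-1:ℤ))),
       ((⟨2*k+1, h1⟩ : Fin (4*k)), (-(k:ℤ)-1, (k:ℤ)-1)),
       ((⟨4*k-1, h2⟩ : Fin (4*k)), ((-1:ℤ), (-1:ℤ)))} := by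
  ext ⟨v, q⟩
  simp only [Set.mem_insert_iff, Set.mem_singleton_iff]
  constructor
  · intro hmem
    rcases mcs_subset k hk v q hmem with ⟨hv, ha, hb⟩ | ⟨hv, ha, hb⟩ | ⟨hv, ha, hb⟩ | ⟨hv, ha, hb⟩
    · exact Or.inl (Prod.ext_iff.mpr ⟨Fin.ext hv, Prod.ext_iff.mpr ⟨ha, hb⟩⟩)
    · exact Or.inr (Or.inl (Prod.ext_iff.mpr ⟨Fin.ext hv, Prod.ext_iff.mpr ⟨ha, hb⟩⟩))
    · exact Or.inr (Or.inr (Or.inl (Prod.ext_iff.mpr ⟨Fin.ext hv, Prod.ext_iff.mpr ⟨ha, hb⟩⟩)))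
    · exact Or.inr (Or.inr (Or.inr (Prod.ext_iff.mpr ⟨Fin.ext hv, Prod.ext_iff.mpr ⟨ha, hb⟩⟩)))
  · intro h
    rcases h with h | h | h | h <;> rw [Prod.ext_iff] at h <;> obtain ⟨hveq, hqeq⟩ := h
    · replace hveq : v = ⟨0, h0⟩ := hveq
      replace hqeq : q = ((1:ℤ), (0:ℤ)) := hqeq
      subst hveq; subst hqeq
      refine mcs_mem k hk 0 h0 _ (Or.inl ⟨by omega, by omega⟩) ?_ ?_
      · show (gx k 0 - 1).natAbs + (gy k 0 - 0).natAbs = 1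
        unfold gx gy; split_ifs <;> omega
      · intro u hu heq
        rw [Prod.mk.injEq] at heq
        obtain ⟨b1, b2, b3, b4⟩ := g_bounds k u hu
        omega
    · replace hveq : v = ⟨0, h0⟩ := hveq
      replace hqeq : q = ((0:ℤ), (-1:ℤ)) := hqeq
      subst hveq; subst hqeq
      refine mcs_mem k hk 0 h0 _ (Or.inl ⟨by omega, by omega⟩) ?_ ?_
      · show (gx k 0 - 0).natAbs + (gy k 0 - (-1)).natAbs = 1
        unfold gx gy; split_ifs <;> omega
      · intro u hu heq
        rw [Prod.mk.injEq] at heq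
        obtain ⟨b1, b2, b3, b4⟩ := g_bounds k u hu
        omega
    · replace hveq : v = ⟨2*k+1, h1⟩ := hveq
      replace hqeq : q = (-(k:ℤ)-1, (k:ℤ)-1) := hqeq
      subst hveq; subst hqeq
      refine mcs_mem k hk (2*k+1) h1 _ (Or.inr ⟨by omega, by omega⟩) ?_ ?_
      · show (gx k (2*k+1) - (-(k:ℤ)-1)).natAbs + (gy k (2*k+1) - ((k:ℤ)-1)).natAbs = 1
        unfold gx gy; split_ifs <;> omega
      · intro u hu heq
        rw [Prod.mk.injEq] at heq
        obtain ⟨b1, b2, b3, b4⟩ := g_bounds k u hu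
        omega
    · replace hveq : v = ⟨4*k-1, h2⟩ := hveq
      replace hqeq : q = ((-1:ℤ), (-1:ℤ)) := hqeq
      subst hveq; subst hqeq
      refine mcs_mem k hk (4*k-1) h2 _ (Or.inr ⟨by omega, by omega⟩) ?_ ?_
      · show (gx k (4*k-1) - (-1)).natAbs + (gy k (4*k-1) - (-1)).natAbs = 1
        unfold gx gy; split_ifs <;> omega
      · intro u hu heq
        rw [Prod.mk.injEq] at heq
        obtain ⟨b1, b2, b3, b4⟩ := g_bounds k u hu
        omega

set_option maxHeartbeats 1600000 in
/-- For every `k ≥ 1`, the standard folding of the open HP chain `Z_{2k}`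
(PP edge horizontal, the two edges adjacent to it descending from it, and the remaining
edges of the two halves forming staircases) is a folding and has exactly four missing
contacts, all of them external. -/
theorem stdZ_has_four_missing_contacts_all_external (k : ℕ) (hk : 1 ≤ k) :
    IsOpenFolding (4*k) (stdZPos k) ∧
    (missingContactSet (4*k) (zLabel k) (stdZPos k)).ncard = 4 ∧
    ∀ vq ∈ missingContactSet (4*k) (zLabel k) (stdZPos k),
      ¬ inBBox (4*k) (stdZPos k) vq.2 := by
  have hpos : ∀ i : Fin (4*k), stdZPos k i = (gx k i.val, gy k i.val) := stdZPos_eq k hk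
  have h0 : 0 < 4*k := by omega
  have h1 : 2*k+1 < 4*k := by omega
  have h2 : 4*k-1 < 4*k := by omega
  have hset := mcs_eq k hk h0 h1 h2
  refine ⟨std_fold k hk, ?_, ?_⟩
  · rw [hset]
    rw [Set.ncard_insert_of_notMem (by
        intro hc
        simp only [Set.mem_insert_iff, Set.mem_singleton_iff] at hc
        rcases hc with hc | hc | hc <;>
          simp only [Prod.mk.injEq, Fin.mk.injEq] at hc <;> omega),
      Set.ncard_insert_of_notMem (by
        intro hc
        simp only [Set.mem_insert_iff, Set.mem_singleton_iff] at hc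
        rcases hc with hc | hc <;>
          simp only [Prod.mk.injEq, Fin.mk.injEq] at hc <;> omega),
      Set.ncard_pair (by
        intro hc
        simp only [Prod.mk.injEq, Fin.mk.injEq] at hc
        omega)]
  · intro vq hmem hbox
    rw [hset] at hmem
    simp only [Set.mem_insert_iff, Set.mem_singleton_iff] at hmem
    rcases hmem with h | h | h | h <;> subst h
    · obtain ⟨-, ⟨i, hb⟩, -, -⟩ := hbox
      rw [hpos] at hb
      replace hb : (1:ℤ) ≤ gx k i.val := hb
      obtain ⟨b1, b2, b3, b4⟩ := g_bounds k i.val i.isLt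
      omega
    · obtain ⟨-, -, ⟨i, hb⟩, -⟩ := hbox
      rw [hpos] at hb
      replace hb : gy k i.val ≤ -1 := hb
      obtain ⟨b1, b2, b3, b4⟩ := g_bounds k i.val i.isLt
      omega
    · obtain ⟨⟨i, hb⟩, -, -, -⟩ := hbox
      rw [hpos] at hb
      replace hb : gx k i.val ≤ -(k:ℤ)-1 := hb
      obtain ⟨b1, b2, b3, b4⟩ := g_bounds k i.val i.isLt
      omega
    · obtain ⟨-, -, ⟨i, hb⟩, -⟩ := hbox
      rw [hpos] at hb
      replace hb : gy k i.val ≤ -1 := hb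
      obtain ⟨b1, b2, b3, b4⟩ := g_bounds k i.val i.isLt
      omega
end
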